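/- arXiv:2602.01499 — 3 statements merged into one kernel-verified Lean document; each statement's English description precedes it below -/
import Mathlib

section
/- Let k ∈ ℕ, let G be the k²×k² grid and let W be the k×k grid. Then for every labeling γ: E(G) → ℤ/2ℤ, the signed graph (G,γ) contains (W,γ₀) as a subdivision (where γ₀ labels every edge 0). -/
namespace TDMPaper

/-- A finite multigraph without loops: edges carry their unordered pair of endpoints. -/
structure MGraph where
  V : Type
  E : Type
  finV : Finite V
  finE : Finite E
  ends : E → Sym2 V
  loopless : ∀ e, ¬ (ends e).IsDiag

attribute [instance] MGraph.finV MGraph.finE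

namespace MGraph

/-- A cycle in a multigraph, given by cyclically ordered distinct vertices and
distinct edges. -/
structure Cycle (G : MGraph) where
  n : ℕ
  npos : 0 < n
  vtx : Fin n → G.V
  edge : Fin n → G.E
  vtx_inj : Function.Injective vtx
  edge_inj : Function.Injective edge
  ends_eq : ∀ i : Fin n,
    G.ends (edge i) = s(vtx i, vtx ⟨(i.1 + 1) % n, Nat.mod_lt _ npos⟩)

/-- The parity of a cycle with respect to a signing `γ`. -/
def Cycle.parity {G : MGraph} (C : G.Cycle) (γ : G.E → ZMod 2) : ZMod 2 :=
  ∑ i, γ (C.edge i)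

/-- The vertex set of a cycle. -/
def Cycle.support {G : MGraph} (C : G.Cycle) : Set G.V := Set.range C.vtx

/-- The odd cycle packing number of a signed graph: the maximum number of pairwise
vertex-disjoint odd cycles. -/
noncomputable def OCP (G : MGraph) (γ : G.E → ZMod 2) : ℕ :=
  sSup {k : ℕ | ∃ C : Fin k → G.Cycle,
    (∀ i, (C i).parity γ = 1) ∧
    ∀ i j, i ≠ j → Disjoint ((C i).support) ((C j).support)}

/-- The subgraph induced by a vertex set `S` (kept on the same vertex type; only
edges with both endpoints in `S` survive). -/
def induce (G : MGraph) (S : Set G.V) : MGraph where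
  V := G.V
  E := {e : G.E // ∀ v ∈ G.ends e, v ∈ S}
  finV := G.finV
  finE := inferInstance
  ends := fun e => G.ends e.1
  loopless := fun e => G.loopless e.1

/-- The odd cycle packing number of the subgraph induced on `S`, signs inherited. -/
noncomputable def OCPOn (G : MGraph) (γ : G.E → ZMod 2) (S : Set G.V) : ℕ :=
  (G.induce S).OCP (fun e => γ e.1)

/-- A path in a multigraph. -/
structure Path (G : MGraph) where
  n : ℕ
  vtx : Fin (n + 1) → G.V
  edge : Fin n → G.E
  vtx_inj : Function.Injective vtx
  ends_eq : ∀ i : Fin n, G.ends (edge i) = s(vtx i.castSucc, vtx i.succ)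

def Path.first {G : MGraph} (P : G.Path) : G.V := P.vtx 0
def Path.last {G : MGraph} (P : G.Path) : G.V := P.vtx (Fin.last P.n)
def Path.support {G : MGraph} (P : G.Path) : Set G.V := Set.range P.vtx
def Path.internals {G : MGraph} (P : G.Path) : Set G.V :=
  P.support \ {P.first, P.last}
def Path.parity {G : MGraph} (P : G.Path) (γ : G.E → ZMod 2) : ZMod 2 :=
  ∑ i, γ (P.edge i)

end MGraph

open MGraph

/-- `γ'` is obtained from `γ` by a sequence of shiftings at vertices. -/
def IsShift (G : MGraph) (γ γ' : G.E → ZMod 2) : Prop :=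
  ∃ σ : G.V → ZMod 2, ∀ e u v, G.ends e = s(u, v) → γ' e = γ e + σ u + σ v

/-- A minor model of `H` in `G`: disjoint nonempty connected branch sets and an
injective assignment of edges. -/
structure MinorModel (H G : MGraph) where
  bs : H.V → Set G.V
  em : H.E → G.E
  bs_nonempty : ∀ v, (bs v).Nonempty
  bs_disjoint : ∀ u v, u ≠ v → Disjoint (bs u) (bs v)
  bs_connected : ∀ v, ∀ a ∈ bs v, ∀ b ∈ bs v,
    Relation.ReflTransGen
      (fun x y => x ∈ bs v ∧ y ∈ bs v ∧ ∃ e, G.ends e = s(x, y)) a b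
  em_inj : Function.Injective em
  em_ends : ∀ eH u v, H.ends eH = s(u, v) →
    ∃ a ∈ bs u, ∃ b ∈ bs v, G.ends (em eH) = s(a, b)

/-- `H` is a minor of `G`. -/
def IsMinor (H G : MGraph) : Prop := Nonempty (MinorModel H G)

/-- `(H,KH)` is a rooted minor of `(G,KG)`: there is a minor model in which the
branch set of every root of `H` contains a root of `G`. -/
def IsRootedMinor (H : MGraph) (KH : Set H.V) (G : MGraph) (KG : Set G.V) : Prop :=
  ∃ M : MinorModel H G, ∀ v ∈ KH, (M.bs v ∩ KG).Nonempty

/-- A signed minor model of `(H,γH)` in `(G,γG)`: after shifting, branch sets are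
connected through even edges and edges of `H` get edges of `G` of the correct sign. -/
structure SignedMinorModel (H G : MGraph) (γH : H.E → ZMod 2) (γG : G.E → ZMod 2) where
  γ' : G.E → ZMod 2
  shift : IsShift G γG γ'
  bs : H.V → Set G.V
  em : H.E → G.E
  bs_nonempty : ∀ v, (bs v).Nonempty
  bs_disjoint : ∀ u v, u ≠ v → Disjoint (bs u) (bs v)
  bs_connected : ∀ v, ∀ a ∈ bs v, ∀ b ∈ bs v,
    Relation.ReflTransGen
      (fun x y => x ∈ bs v ∧ y ∈ bs v ∧ ∃ e, γ' e = 0 ∧ G.ends e = s(x, y)) a b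
  em_inj : Function.Injective em
  em_ends : ∀ eH u v, H.ends eH = s(u, v) →
    ∃ a ∈ bs u, ∃ b ∈ bs v, G.ends (em eH) = s(a, b)
  em_parity : ∀ eH, γ' (em eH) = γH eH

/-- `(H,γH)` is a signed graph minor of `(G,γG)`. -/
def IsSignedMinor (H : MGraph) (γH : H.E → ZMod 2) (G : MGraph)
    (γG : G.E → ZMod 2) : Prop :=
  Nonempty (SignedMinorModel H G γH γG)

/-- `(H,γH,KH)` is a rooted signed graph minor of `(G,γG,KG)`. -/
def IsRootedSignedMinor (H : MGraph) (γH : H.E → ZMod 2) (KH : Set H.V)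
    (G : MGraph) (γG : G.E → ZMod 2) (KG : Set G.V) : Prop :=
  ∃ M : SignedMinorModel H G γH γG, ∀ v ∈ KH, (M.bs v ∩ KG).Nonempty

/-- An odd minor model of `H` in `G`: a minor model together with a 2-colouring of
`G` which is proper on each branch set (branch sets are connected through
bichromatic edges) and for which every model edge is monochromatic. -/
structure OddMinorModel (H G : MGraph) where
  bs : H.V → Set G.V
  em : H.E → G.E
  col : G.V → ZMod 2
  bs_nonempty : ∀ v, (bs v).Nonempty
  bs_disjoint : ∀ u v, u ≠ v → Disjoint (bs u) (bs v)
  bs_connected : ∀ v, ∀ a ∈ bs v, ∀ b ∈ bs v,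
    Relation.ReflTransGen
      (fun x y => x ∈ bs v ∧ y ∈ bs v ∧ col x ≠ col y ∧ ∃ e, G.ends e = s(x, y)) a b
  em_inj : Function.Injective em
  em_ends : ∀ eH u v, H.ends eH = s(u, v) →
    ∃ a ∈ bs u, ∃ b ∈ bs v, G.ends (em eH) = s(a, b)
  em_mono : ∀ eH u v, G.ends (em eH) = s(u, v) → col u = col v

/-- `G` contains `H` as an odd-minor. -/
def IsOddMinor (H G : MGraph) : Prop := Nonempty (OddMinorModel H G)

/-- `(G,γG)` contains `(H,γH)` as a subdivision. -/
def IsSignedSubdivision (H : MGraph) (γH : H.E → ZMod 2) (G : MGraph)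
    (γG : G.E → ZMod 2) : Prop :=
  ∃ (γH' : H.E → ZMod 2) (_ : IsShift H γH γH')
    (φV : H.V → G.V) (φE : H.E → G.Path),
    Function.Injective φV ∧
    (∀ eH u v, H.ends eH = s(u, v) →
      s((φE eH).first, (φE eH).last) = s(φV u, φV v)) ∧
    (∀ eH, (φE eH).parity γG = γH' eH) ∧
    (∀ e e', e ≠ e' → Disjoint ((φE e).internals) ((φE e').support)) ∧
    (∀ e, Disjoint ((φE e).internals) (Set.range φV))

/-! ## Tree decompositions and width parameters -/

/-- A tree decomposition of a multigraph. -/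
structure TreeDecomp (G : MGraph) where
  ι : Type
  tree : SimpleGraph ι
  isTree : tree.IsTree
  bag : ι → Set G.V
  covers_vertex : ∀ v, ∃ t, v ∈ bag t
  covers_edge : ∀ e, ∃ t, ∀ v ∈ G.ends e, v ∈ bag t
  bag_connected : ∀ v, (tree.induce {t | v ∈ bag t}).Connected

/-- A node of a tree is a leaf if it has at most one neighbour. -/
def IsLeaf {ι : Type} (T : SimpleGraph ι) (t : ι) : Prop :=
  (T.neighborSet t).Subsingleton

/-- A tree `K`-free-decomposition. -/
structure KFreeDecomp (G : MGraph) (K : Set G.V) extends TreeDecomp G where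
  L : Set G.V
  L_disj : Disjoint L K
  unique_bag : ∀ v ∈ L, ∃! t, v ∈ bag t
  leaf_bag : ∀ v ∈ L, ∀ t, v ∈ bag t → IsLeaf tree t

/-- The width of a tree `K`-free-decomposition: `max {0, max_t |β(t)\L| - 1}`. -/
noncomputable def KFreeDecomp.width {G : MGraph} {K : Set G.V}
    (D : KFreeDecomp G K) : ℕ :=
  ⨆ t : D.ι, ((D.bag t \ D.L).ncard - 1)

/-- The `K`-free treewidth of `(G,K)`. -/
noncomputable def twK (G : MGraph) (K : Set G.V) : ℕ :=
  sInf {w | ∃ D : KFreeDecomp G K, D.width = w}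

/-- A tame OCP-tree-decomposition of a signed graph. -/
structure TameOCPDecomp (G : MGraph) (γ : G.E → ZMod 2) extends TreeDecomp G where
  prot : ι → Set G.V
  prot_sub : ∀ t, prot t ⊆ bag t
  prot_adh : ∀ t t', tree.Adj t t' → ((bag t ∩ bag t') \ prot t).ncard ≤ 1

/-- The tame width (t-width) of a tame OCP-tree-decomposition. -/
noncomputable def TameOCPDecomp.twidth {G : MGraph} {γ : G.E → ZMod 2}
    (D : TameOCPDecomp G γ) : ℕ :=
  ⨆ t : D.ι, ((D.prot t).ncard + G.OCPOn γ (D.bag t \ D.prot t))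

/-- The tame OCP-treewidth of a signed graph. -/
noncomputable def tOCPtw (G : MGraph) (γ : G.E → ZMod 2) : ℕ :=
  sInf {w | ∃ D : TameOCPDecomp G γ, D.twidth = w}

/-- A TDM-tree-decomposition of a rooted signed graph. -/
structure TDMDecomp (G : MGraph) (γ : G.E → ZMod 2) (K : Set G.V)
    extends TreeDecomp G where
  prot : ι → Set G.V
  J : Set ι
  J_subtree : J.Nonempty → (tree.induce J).Connected
  prot_sub : ∀ t, prot t ⊆ bag t
  prot_roots : ∀ t, K ∩ bag t ⊆ prot t
  prot_adh : ∀ t t', tree.Adj t t' → ((bag t ∩ bag t') \ prot t).ncard ≤ 1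
  strong : ∀ t ∈ J, ∀ t', tree.Adj t t' → bag t ∩ bag t' ⊆ prot t
  roots_in_J : K ⊆ ⋃ j ∈ J, bag j

/-- The width of a TDM-tree-decomposition. -/
noncomputable def TDMDecomp.width {G : MGraph} {γ : G.E → ZMod 2} {K : Set G.V}
    (D : TDMDecomp G γ K) : ℕ :=
  ⨆ t : D.ι, ((D.prot t).ncard + G.OCPOn γ (D.bag t \ D.prot t))

/-- The TDM-treewidth of a rooted signed graph. -/
noncomputable def TDMtw (G : MGraph) (γ : G.E → ZMod 2) (K : Set G.V) : ℕ :=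
  sInf {w | ∃ D : TDMDecomp G γ K, D.width = w}

/-! ## Grids, parity handles, parity vortices -/

/-- Adjacency of the grid, on `ℕ × ℕ` coordinates. -/
def gridAdj (a b : ℕ × ℕ) : Prop :=
  (a.1 = b.1 ∧ (a.2 + 1 = b.2 ∨ b.2 + 1 = a.2)) ∨
  (a.2 = b.2 ∧ (a.1 + 1 = b.1 ∨ b.1 + 1 = a.1))

/-- The `k × k` grid. -/
def gridGraph (k : ℕ) : MGraph where
  V := Fin k × Fin k
  E := {e : Sym2 (Fin k × Fin k) //
    ∃ a b : Fin k × Fin k, gridAdj (a.1.1, a.2.1) (b.1.1, b.2.1) ∧ e = s(a, b)}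
  finV := inferInstance
  finE := inferInstance
  ends := Subtype.val
  loopless := fun e he => by
    obtain ⟨a, b, hab, h⟩ := e.2
    rw [h, Sym2.mk_isDiag_iff] at he
    subst he
    rcases hab with ⟨_, h' | h'⟩ | ⟨_, h' | h'⟩ <;> omega

/-- The first row of the `k × k` grid. -/
def firstRow (k : ℕ) : Set (gridGraph k).V := {p : Fin k × Fin k | p.1.1 = 0}

/-- The `i`-th designated vertex `x_i` on the outer face of the cylindrical
`(k × 4k)`-grid (every other vertex, `0`-indexed). -/
def xvtx (k : ℕ) (i : Fin (2 * k)) : Fin k × Fin (4 * k) :=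
  (⟨0, by have := i.2; omega⟩, ⟨2 * i.1, by have := i.2; omega⟩)

/-- Adjacency of the cylindrical `(k × 4k)`-grid `P_k □ C_{4k}`. -/
def cylAdj (k : ℕ) (a b : Fin k × Fin (4 * k)) : Prop :=
  (a.1 = b.1 ∧ (a.2.1 + 1 = b.2.1 ∨ b.2.1 + 1 = a.2.1 ∨
    (a.2.1 = 0 ∧ b.2.1 + 1 = 4 * k) ∨ (b.2.1 = 0 ∧ a.2.1 + 1 = 4 * k))) ∨
  (a.2 = b.2 ∧ (a.1.1 + 1 = b.1.1 ∨ b.1.1 + 1 = a.1.1))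

/-- The chords `x_i x_{2k-i+1}` of the parity handle. -/
def handleChord (k : ℕ) (e : Sym2 (Fin k × Fin (4 * k))) : Prop :=
  ∃ i : Fin k, e = s(xvtx k ⟨i.1, by have := i.2; omega⟩,
    xvtx k ⟨2 * k - 1 - i.1, by have := i.2; omega⟩)

/-- The chords `x_{2i-1} x_{2i}` of the parity vortex. -/
def vortexChord (k : ℕ) (e : Sym2 (Fin k × Fin (4 * k))) : Prop :=
  ∃ i : Fin k, e = s(xvtx k ⟨2 * i.1, by have := i.2; omega⟩,
    xvtx k ⟨2 * i.1 + 1, by have := i.2; omega⟩)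

lemma xvtx_ne (k : ℕ) (i j : Fin (2 * k)) (h : i.1 ≠ j.1) : xvtx k i ≠ xvtx k j := by
  intro hc
  have := congrArg (fun p => p.2.1) hc
  simp only [xvtx] at this
  omega

/-- The unsigned, unrooted parity handle `H_k`. -/
def handleGraph (k : ℕ) : MGraph where
  V := Fin k × Fin (4 * k)
  E := {e : Sym2 (Fin k × Fin (4 * k)) //
    (∃ a b, cylAdj k a b ∧ e = s(a, b)) ∨ handleChord k e}
  finV := inferInstance
  finE := inferInstance
  ends := Subtype.val
  loopless := fun e he => by
    rcases e.2 with ⟨a, b, hab, h⟩ | ⟨i, h⟩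
    · rw [h, Sym2.mk_isDiag_iff] at he
      subst he
      have h1 := a.1.2
      have h2 := a.2.2
      rcases hab with ⟨_, h' | h' | ⟨h', h''⟩ | ⟨h', h''⟩⟩ | ⟨_, h' | h'⟩ <;> omega
    · rw [h, Sym2.mk_isDiag_iff] at he
      have := i.2
      exact xvtx_ne k _ _ (show (i.1 : ℕ) ≠ 2 * k - 1 - i.1 by omega) he

/-- The unsigned, unrooted parity vortex `V_k`. -/
def vortexGraph (k : ℕ) : MGraph where
  V := Fin k × Fin (4 * k)
  E := {e : Sym2 (Fin k × Fin (4 * k)) //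
    (∃ a b, cylAdj k a b ∧ e = s(a, b)) ∨ vortexChord k e}
  finV := inferInstance
  finE := inferInstance
  ends := Subtype.val
  loopless := fun e he => by
    rcases e.2 with ⟨a, b, hab, h⟩ | ⟨i, h⟩
    · rw [h, Sym2.mk_isDiag_iff] at he
      subst he
      have h1 := a.1.2
      have h2 := a.2.2
      rcases hab with ⟨_, h' | h' | ⟨h', h''⟩ | ⟨h', h''⟩⟩ | ⟨_, h' | h'⟩ <;> omega
    · rw [h, Sym2.mk_isDiag_iff] at he
      have := i.2
      exact xvtx_ne k _ _ (show (2 * i.1 : ℕ) ≠ 2 * i.1 + 1 by omega) he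

/-- The all-zero signing. -/
def γ₀ (G : MGraph) : G.E → ZMod 2 := fun _ => 0

/-- The all-one signing. -/
def γ₁ (G : MGraph) : G.E → ZMod 2 := fun _ => 1

/-! ## Matrices with two nonzero entries per row -/

/-- `A` has exactly two nonzero entries in every row. -/
def TwoNonzeroPerRow {m n : ℕ} (A : Matrix (Fin m) (Fin n) ℤ) : Prop :=
  ∀ i, {j | A i j ≠ 0}.ncard = 2

/-- The graph `G(A)` of a matrix with exactly two nonzero entries per row:
vertices are columns, edges are rows, each row joining its two nonzero columns. -/
noncomputable def matrixGraph {m n : ℕ} (A : Matrix (Fin m) (Fin n) ℤ)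
    (h : TwoNonzeroPerRow A) : MGraph where
  V := Fin n
  E := Fin m
  finV := inferInstance
  finE := inferInstance
  ends := fun i => s((Set.ncard_eq_two.mp (h i)).choose,
    (Set.ncard_eq_two.mp (h i)).choose_spec.choose)
  loopless := fun i hi => by
    rw [Sym2.mk_isDiag_iff] at hi
    exact (Set.ncard_eq_two.mp (h i)).choose_spec.choose_spec.1 hi

/-- The signing of `G(A)`: a row is even iff its two nonzero entries have
different signs (i.e. the product of its nonzero entries is negative). -/
def matrixSign {m n : ℕ} (A : Matrix (Fin m) (Fin n) ℤ) : Fin m → ZMod 2 :=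
  fun i => if (∏ j ∈ Finset.univ.filter (fun j => A i j ≠ 0), A i j) < 0 then 0 else 1

/-- The roots of `G⁺_•(A)`: columns containing an entry outside `{-1,0,1}`. -/
def matrixRoots {m n : ℕ} (A : Matrix (Fin m) (Fin n) ℤ) : Set (Fin n) :=
  {j | ∃ i, 1 < (A i j).natAbs}

/-- The TDM-treewidth of the rooted signed graph `G⁺_•(A)` associated to `A`. -/
noncomputable def matrixTDMtw {m n : ℕ} (A : Matrix (Fin m) (Fin n) ℤ)
    (h : TwoNonzeroPerRow A) : ℕ :=
  TDMtw (matrixGraph A h) (fun e => matrixSign A e) (fun j => matrixRoots A j)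

/-- The largest absolute value of an entry of `A`. -/
def maxAbsEntry {m n : ℕ} (A : Matrix (Fin m) (Fin n) ℤ) : ℕ :=
  Finset.sup Finset.univ fun i => Finset.sup Finset.univ fun j => (A i j).natAbs

/-- `A` is totally `Δ`-modular: every square subdeterminant has absolute value at
most `Δ`. -/
def TotallyDeltaModular {m n : ℕ} (A : Matrix (Fin m) (Fin n) ℤ) (Δ : ℕ) : Prop :=
  ∀ (s : ℕ) (r : Fin s → Fin m) (c : Fin s → Fin n),
    Function.Injective r → Function.Injective c →
    ((A.submatrix r c).det).natAbs ≤ Δ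

/-- The set of objective values of feasible points of the integer program
`max { wᵀx : Ax ≤ b, ℓ ≤ x ≤ u, x integral }`. -/
def IPvalues {m n : ℕ} (A : Matrix (Fin m) (Fin n) ℤ) (b : Fin m → ℤ)
    (w ℓ u : Fin n → ℤ) : Set ℤ :=
  {y | ∃ x : Fin n → ℤ, (∀ i, ∑ j, A i j * x j ≤ b i) ∧
    (∀ j, ℓ j ≤ x j ∧ x j ≤ u j) ∧ y = ∑ j, w j * x j}

/-- `o` solves the maximization problem over `S`: it is `none` iff `S` is
infeasible, and otherwise it is the maximum value. -/
def SolvesIP (o : Option ℤ) (S : Set ℤ) : Prop :=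
  (o = none ∧ S = ∅) ∨ ∃ y, o = some y ∧ IsGreatest S y


lemma exists_pair {α : Type} (z : Sym2 α) : ∃ p : α × α, z = s(p.1, p.2) :=
  Sym2.ind (fun a b => ⟨(a, b), rfl⟩) z

/-- A chosen first endpoint of an edge. -/
noncomputable def MGraph.ep1 (G : MGraph) (e : G.E) : G.V :=
  (exists_pair (G.ends e)).choose.1

/-- A chosen second endpoint of an edge. -/
noncomputable def MGraph.ep2 (G : MGraph) (e : G.E) : G.V :=
  (exists_pair (G.ends e)).choose.2

lemma MGraph.ends_ep (G : MGraph) (e : G.E) : G.ends e = s(G.ep1 e, G.ep2 e) :=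
  (exists_pair (G.ends e)).choose_spec

lemma map_inl_not_isDiag {α β : Type} (z : Sym2 α) (hz : ¬ z.IsDiag) :
    ¬ (z.map (Sum.inl : α → α ⊕ β)).IsDiag := by
  induction z using Sym2.ind with
  | _ a b =>
    simp only [Sym2.map_pair_eq, Sym2.mk_isDiag_iff] at *
    exact fun h => hz (by injection h)

/-- The graph obtained from `(G,γ)` by subdividing every even edge exactly once. -/
noncomputable def subdivideEven (G : MGraph) (γ : G.E → ZMod 2) : MGraph where
  V := G.V ⊕ {e : G.E // γ e = 0}
  E := {e : G.E // γ e ≠ 0} ⊕ ({e : G.E // γ e = 0} × Bool)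
  finV := inferInstance
  finE := inferInstance
  ends := fun x =>
    match x with
    | .inl e => (G.ends e.1).map .inl
    | .inr (e, b) => s(.inr e, .inl (if b then G.ep1 e.1 else G.ep2 e.1))
  loopless := fun x => by
    match x with
    | .inl e => exact map_inl_not_isDiag _ (G.loopless e.1)
    | .inr (e, b) =>
      rw [Sym2.mk_isDiag_iff]
      simp

/-- Minimum degree at least `d` (each vertex is incident to at least `d` edges). -/
def minDegreeGE (G : MGraph) (d : ℕ) : Prop :=
  ∀ v : G.V, d ≤ {e : G.E | v ∈ G.ends e}.ncard

/-- The `j`-th vertex of the subdividing path: `u`, then `ℓ` new internal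
vertices, then `v`. -/
def pathVert {α : Type} (u v : α) (ℓ : ℕ) (j : Fin (ℓ + 2)) : α ⊕ Fin ℓ :=
  if h0 : j.1 = 0 then .inl u
  else if h1 : j.1 = ℓ + 1 then .inl v
  else .inr ⟨j.1 - 1, by have := j.2; omega⟩

/-- The graph obtained from `G` by replacing the edge `e₀` (with ends `u,v`) by a
path with `ℓ` internal vertices (hence `ℓ + 1` edges). -/
def replaceEdge (G : MGraph) (e₀ : G.E) (u v : G.V) (h : G.ends e₀ = s(u, v))
    (ℓ : ℕ) : MGraph where
  V := G.V ⊕ Fin ℓ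
  E := {e : G.E // e ≠ e₀} ⊕ Fin (ℓ + 1)
  finV := inferInstance
  finE := inferInstance
  ends := fun x =>
    match x with
    | .inl e => (G.ends e.1).map .inl
    | .inr i => s(pathVert u v ℓ ⟨i.1, by have := i.2; omega⟩,
        pathVert u v ℓ ⟨i.1 + 1, by have := i.2; omega⟩)
  loopless := fun x => by
    match x with
    | .inl e => exact map_inl_not_isDiag _ (G.loopless e.1)
    | .inr i =>
      rw [Sym2.mk_isDiag_iff]
      have huv : u ≠ v := by
        intro hc
        exact G.loopless e₀ (by rw [h, hc]; simp)
      have hi := i.2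
      simp only [pathVert]
      split_ifs <;> (simp_all; try omega)

/-- The signing of `replaceEdge`: old edges keep their sign, the `i`-th path edge
gets sign `δ i`. -/
def replaceGamma {G : MGraph} {e₀ : G.E} {u v : G.V} {h : G.ends e₀ = s(u, v)}
    {ℓ : ℕ} (γ : G.E → ZMod 2) (δ : Fin (ℓ + 1) → ZMod 2) :
    (replaceEdge G e₀ u v h ℓ).E → ZMod 2 :=
  fun x => match x with
  | .inl e => γ e.1
  | .inr i => δ i

/-!
Place the branch vertex `(i, j)` of the `k × k` grid at `(i (k + 1), j (k + 1))` and map its edges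
to straight paths of length `k + 1`. Shifting by the sign of the tree path to each branch vertex
(down the first column, then along its row) makes every such path even, except possibly vertical
paths off the first column. Such a path can be given the other sign by a detour around a row of
faces of odd total sign inside the `k × k` window to its left, which is possible as soon as that
window contains an odd face. If instead some window has only even faces, the signing restricted to
it is a shift of the zero signing, and the window itself is the required grid.
-/

section Grid

open MGraph Finset

lemma zmod2_add_one_eq_of_ne {x y : ZMod 2} (h : x ≠ y) : x + 1 = y := by
  revert x y; decide

lemma zmod2_eq_one_of_ne_zero {x : ZMod 2} (h : x ≠ 0) : x = 1 := by
  revert x; decide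

lemma sum_Ico_add_succ_of_charTwo {R : Type*} [Ring R] [CharP R 2] (f : ℕ → R) {m n : ℕ}
    (h : m ≤ n) : ∑ i ∈ Ico m n, (f i + f (i + 1)) = f m + f n := by
  simpa only [CharTwo.sub_eq_add, add_comm] using sum_Ico_sub f h

lemma exists_sum_Ico_eq_one {f : ℕ → ZMod 2} {c e : ℕ} (hce : c < e) (hc : f c = 1) :
    ∃ c₁, c ≤ c₁ ∧ c₁ < e ∧ ∑ t ∈ Ico c₁ e, f t = 1 := by
  by_cases h : ∑ t ∈ Ico (c + 1) e, f t = 0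
  · exact ⟨c, le_rfl, hce, by rw [sum_eq_sum_Ico_succ_bot hce, hc, h, add_zero]⟩
  · have hlt : c + 1 < e := by
      by_contra! hle
      exact h (by rw [Ico_eq_empty (by omega), sum_empty])
    exact ⟨c + 1, by omega, hlt, zmod2_eq_one_of_ne_zero h⟩

def InBox (K : ℕ) (p : ℕ × ℕ) : Prop := p.1 < K ∧ p.2 < K

def vertexAt {K : ℕ} (p : ℕ × ℕ) (h : InBox K p) : (gridGraph K).V := (⟨p.1, h.1⟩, ⟨p.2, h.2⟩)

def coord {K : ℕ} (v : (gridGraph K).V) : ℕ × ℕ := (v.1.1, v.2.1)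

@[simp] lemma coord_vertexAt {K : ℕ} (p : ℕ × ℕ) (h : InBox K p) :
    coord (vertexAt p h) = p := rfl

lemma coord_injective {K : ℕ} : Function.Injective (coord (K := K)) := by
  rintro ⟨a, b⟩ ⟨c, d⟩ h
  simp only [coord, Prod.mk.injEq] at h
  rw [Fin.ext h.1, Fin.ext h.2]

def edgeAt {K : ℕ} {p q : ℕ × ℕ} (hpq : gridAdj p q) (hp : InBox K p) (hq : InBox K q) :
    (gridGraph K).E :=
  ⟨s(vertexAt p hp, vertexAt q hq), vertexAt p hp, vertexAt q hq, hpq, rfl⟩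

lemma gridAdj_comm {p q : ℕ × ℕ} : gridAdj p q ↔ gridAdj q p := by
  unfold gridAdj; tauto

/-- Extended by `0` to pairs that are not grid edges. -/
noncomputable def edgeSign {K : ℕ} (γ : (gridGraph K).E → ZMod 2) (p q : ℕ × ℕ) : ZMod 2 :=
  open Classical in
  if h : gridAdj p q ∧ InBox K p ∧ InBox K q then γ (edgeAt h.1 h.2.1 h.2.2) else 0

lemma edgeSign_comm {K : ℕ} (γ : (gridGraph K).E → ZMod 2) (p q : ℕ × ℕ) :
    edgeSign γ p q = edgeSign γ q p := by
  unfold edgeSign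
  by_cases h : gridAdj p q ∧ InBox K p ∧ InBox K q
  · rw [dif_pos h, dif_pos ⟨gridAdj_comm.1 h.1, h.2.2, h.2.1⟩]
    exact congrArg γ (Subtype.ext Sym2.eq_swap)
  · rw [dif_neg h, dif_neg fun h' => h ⟨gridAdj_comm.1 h'.1, h'.2.2, h'.2.1⟩]

noncomputable def hSign {K : ℕ} (γ : (gridGraph K).E → ZMod 2) (r c : ℕ) : ZMod 2 :=
  edgeSign γ (r, c) (r, c + 1)

noncomputable def vSign {K : ℕ} (γ : (gridGraph K).E → ZMod 2) (r c : ℕ) : ZMod 2 :=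
  edgeSign γ (r, c) (r + 1, c)

noncomputable def faceSign {K : ℕ} (γ : (gridGraph K).E → ZMod 2) (r c : ℕ) : ZMod 2 :=
  hSign γ r c + hSign γ (r + 1) c + vSign γ r c + vSign γ r (c + 1)

lemma sum_Ico_faceSign {K : ℕ} (γ : (gridGraph K).E → ZMod 2) (r : ℕ) {c₁ c₂ : ℕ}
    (h : c₁ ≤ c₂) :
    ∑ t ∈ Ico c₁ c₂, faceSign γ r t = ∑ t ∈ Ico c₁ c₂, hSign γ r t +
      ∑ t ∈ Ico c₁ c₂, hSign γ (r + 1) t + (vSign γ r c₁ + vSign γ r c₂) := by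
  simp only [faceSign, sum_add_distrib, add_assoc]
  rw [← sum_Ico_add_succ_of_charTwo (fun t => vSign γ r t) h, sum_add_distrib]

structure IsGridWalk (K n : ℕ) (f : ℕ → ℕ × ℕ) : Prop where
  inBox : ∀ t ≤ n, InBox K (f t)
  injOn : ∀ t ≤ n, ∀ s ≤ n, f t = f s → t = s
  adj : ∀ t < n, gridAdj (f t) (f (t + 1))

noncomputable def walkSign {K : ℕ} (γ : (gridGraph K).E → ZMod 2) (n : ℕ) (f : ℕ → ℕ × ℕ) :
    ZMod 2 :=
  ∑ t ∈ range n, edgeSign γ (f t) (f (t + 1))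

section Walks

variable {K : ℕ} (γ : (gridGraph K).E → ZMod 2)

lemma walkSign_add (m n : ℕ) (f : ℕ → ℕ × ℕ) :
    walkSign γ (m + n) f = walkSign γ m f + walkSign γ n (fun t => f (m + t)) :=
  sum_range_add _ m n

lemma walkSign_congr {n : ℕ} {f g : ℕ → ℕ × ℕ} (h : ∀ t ≤ n, f t = g t) :
    walkSign γ n f = walkSign γ n g :=
  sum_congr rfl fun t ht => by
    rw [mem_range] at ht
    rw [h t ht.le, h (t + 1) ht]

lemma walkSign_reverse (n : ℕ) (f : ℕ → ℕ × ℕ) :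
    walkSign γ n (fun t => f (n - t)) = walkSign γ n f := by
  rw [walkSign, walkSign, ← sum_range_reflect (fun t => edgeSign γ (f t) (f (t + 1)))]
  refine sum_congr rfl fun t ht => ?_
  rw [mem_range] at ht
  rw [edgeSign_comm, show n - t = n - 1 - t + 1 by omega, show n - (t + 1) = n - 1 - t by omega]

lemma walkSign_row (r c n : ℕ) :
    walkSign γ n (fun t => (r, c + t)) = ∑ t ∈ Ico c (c + n), hSign γ r t := by
  rw [sum_Ico_eq_sum_range, Nat.add_sub_cancel_left]
  rfl

lemma walkSign_col (r c n : ℕ) :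
    walkSign γ n (fun t => (r + t, c)) = ∑ t ∈ Ico r (r + n), vSign γ t c := by
  rw [sum_Ico_eq_sum_range, Nat.add_sub_cancel_left]
  rfl

end Walks

lemma isGridWalk_row {K r c n : ℕ} (hr : r < K) (hc : c + n < K) :
    IsGridWalk K n (fun t => (r, c + t)) where
  inBox t ht := ⟨hr, by omega⟩
  injOn t _ s _ h := by simp only [Prod.mk.injEq] at h; omega
  adj t _ := Or.inl ⟨rfl, Or.inl rfl⟩

lemma isGridWalk_col {K r c n : ℕ} (hr : r + n < K) (hc : c < K) :
    IsGridWalk K n (fun t => (r + t, c)) where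
  inBox t ht := ⟨by omega, hc⟩
  injOn t _ s _ h := by simp only [Prod.mk.injEq] at h; omega
  adj t _ := Or.inr ⟨rfl, Or.inl rfl⟩

namespace IsGridWalk

variable {K n : ℕ} {f : ℕ → ℕ × ℕ} (hf : IsGridWalk K n f)

def toPath : (gridGraph K).Path where
  n := n
  vtx t := vertexAt (f t) (hf.inBox t (by omega))
  edge t := edgeAt (hf.adj t t.2) (hf.inBox t (by omega)) (hf.inBox (t + 1) (by omega))
  vtx_inj a b h := Fin.ext (hf.injOn a (by omega) b (by omega) (by simpa using congrArg coord h))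
  ends_eq _ := rfl

lemma coord_toPath_first : coord hf.toPath.first = f 0 := rfl

lemma coord_toPath_last : coord hf.toPath.last = f n := rfl

lemma toPath_parity (γ : (gridGraph K).E → ZMod 2) : hf.toPath.parity γ = walkSign γ n f := by
  rw [Path.parity, walkSign, ← Fin.sum_univ_eq_sum_range]
  refine sum_congr rfl fun (t : Fin n) _ => ?_
  unfold edgeSign
  rw [dif_pos ⟨hf.adj t t.2, hf.inBox t (by omega), hf.inBox (t + 1) (by omega)⟩]
  rfl

lemma exists_of_mem_internals {x : (gridGraph K).V} (hx : x ∈ hf.toPath.internals) :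
    ∃ t, 0 < t ∧ t < n ∧ coord x = f t := by
  obtain ⟨⟨t, rfl⟩, hne⟩ := hx
  simp only [Set.mem_insert_iff, Set.mem_singleton_iff, not_or, Path.first, Path.last] at hne
  have ht : t.1 < n + 1 := t.2
  refine ⟨t, Nat.pos_of_ne_zero fun h => hne.1 ?_, lt_of_le_of_ne (by omega) fun h => hne.2 ?_,
    rfl⟩ <;> exact congrArg _ (Fin.ext h)

end IsGridWalk

lemma isSignedSubdivision_γ₀_of_paths {H G : MGraph} {γ : G.E → ZMod 2} (σ : H.V → ZMod 2)
    (φV : H.V → G.V) (hφV : Function.Injective φV) (φE : H.E → G.Path)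
    (hφE : ∀ e, ∃ u v, H.ends e = s(u, v) ∧ (φE e).first = φV u ∧ (φE e).last = φV v ∧
      (φE e).parity γ = σ u + σ v)
    (hdisj : ∀ e e', e ≠ e' → Disjoint (φE e).internals (φE e').internals)
    (hdisjV : ∀ e, Disjoint (φE e).internals (Set.range φV)) :
    IsSignedSubdivision H (γ₀ H) G γ := by
  choose u v hends hfirst hlast hparity using hφE
  have hsupport : ∀ e, (φE e).support ⊆ (φE e).internals ∪ Set.range φV := fun e x hx => by
    by_cases hx' : x ∈ ({(φE e).first, (φE e).last} : Set G.V)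
    · rcases hx' with rfl | rfl
      exacts [Or.inr ⟨_, (hfirst e).symm⟩, Or.inr ⟨_, (hlast e).symm⟩]
    · exact Or.inl ⟨hx, hx'⟩
  refine ⟨fun e => σ (u e) + σ (v e), ⟨σ, fun e a b hab => ?_⟩, φV, φE, hφV,
    fun e a b hab => ?_, hparity, fun e e' hne => ?_, hdisjV⟩
  · rw [hends, Sym2.eq_iff] at hab
    rcases hab with ⟨rfl, rfl⟩ | ⟨rfl, rfl⟩
    · simp [γ₀]
    · simp [γ₀, add_comm]
  · rw [hfirst, hlast, ← Sym2.map_mk, ← Sym2.map_mk, ← hends, hab]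
  · exact Set.disjoint_of_subset_right (hsupport e')
      (Set.disjoint_union_right.2 ⟨hdisj e e' hne, hdisjV e⟩)

def IsGridStep {k : ℕ} (u v : (gridGraph k).V) : Prop :=
  (v.1.1 = u.1.1 ∧ v.2.1 = u.2.1 + 1) ∨ (v.1.1 = u.1.1 + 1 ∧ v.2.1 = u.2.1)

lemma exists_isGridStep {k : ℕ} (e : (gridGraph k).E) :
    ∃ u v, (gridGraph k).ends e = s(u, v) ∧ IsGridStep u v := by
  obtain ⟨a, b, hab, he⟩ := e.2
  rcases hab with ⟨h1, h2 | h2⟩ | ⟨h1, h2 | h2⟩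
  · exact ⟨a, b, he, Or.inl ⟨h1.symm, h2.symm⟩⟩
  · exact ⟨b, a, he.trans Sym2.eq_swap, Or.inl ⟨h1, h2.symm⟩⟩
  · exact ⟨a, b, he, Or.inr ⟨h2.symm, h1.symm⟩⟩
  · exact ⟨b, a, he.trans Sym2.eq_swap, Or.inr ⟨h2.symm, h1⟩⟩

lemma isSignedSubdivision_of_gridWalks {k K : ℕ} {γ : (gridGraph K).E → ZMod 2}
    (pos : (gridGraph k).V → ℕ × ℕ) (hpos : ∀ u, InBox K (pos u))
    (hpos_inj : Function.Injective pos) (σ : (gridGraph k).V → ZMod 2)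
    (O : (gridGraph k).V → (gridGraph k).V → Set (ℕ × ℕ))
    (hdisj : ∀ u v u' v', IsGridStep u v → IsGridStep u' v' → (u, v) ≠ (u', v') →
      Disjoint (O u v) (O u' v'))
    (hpos_notMem : ∀ u v w, IsGridStep u v → pos w ∉ O u v)
    (hwalk : ∀ u v, IsGridStep u v → ∃ n f, IsGridWalk K n f ∧ f 0 = pos u ∧ f n = pos v ∧
      walkSign γ n f = σ u + σ v ∧ ∀ t, 0 < t → t < n → f t ∈ O u v) :
    IsSignedSubdivision (gridGraph k) (γ₀ (gridGraph k)) (gridGraph K) γ := by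
  choose u v hends hstep using exists_isGridStep (k := k)
  choose n f hf hfirst hlast hsign hinterior using fun e => hwalk (u e) (v e) (hstep e)
  have hcoord : ∀ e, ∀ x ∈ (hf e).toPath.internals, coord x ∈ O (u e) (v e) := fun e x hx => by
    obtain ⟨t, ht₀, htn, hxt⟩ := (hf e).exists_of_mem_internals hx
    exact hxt ▸ hinterior e t ht₀ htn
  refine isSignedSubdivision_γ₀_of_paths σ (fun w => vertexAt (pos w) (hpos w))
    (fun w w' h => hpos_inj (by simpa using congrArg coord h)) (fun e => (hf e).toPath)
    (fun e => ⟨u e, v e, hends e, coord_injective ?_, coord_injective ?_,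
      (hf e).toPath_parity γ ▸ hsign e⟩) (fun e e' hne => ?_) (fun e => ?_)
  · rw [(hf e).coord_toPath_first, hfirst, coord_vertexAt]
  · rw [(hf e).coord_toPath_last, hlast, coord_vertexAt]
  · have huv : (u e, v e) ≠ (u e', v e') := fun h => hne <| Subtype.ext <| by
      simp only [Prod.mk.injEq] at h
      exact (hends e).trans (h.1 ▸ h.2 ▸ (hends e').symm)
    exact Set.disjoint_of_subset (hcoord e) (hcoord e') <|
      (hdisj _ _ _ _ (hstep e) (hstep e') huv).preimage coord
  · rw [Set.disjoint_right]
    rintro _ ⟨w, rfl⟩ hw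
    exact hpos_notMem _ _ w (hstep e) (by simpa using hcoord e _ hw)

section EvenWindow

variable {K : ℕ} (γ : (gridGraph K).E → ZMod 2)

def EvenWindow (a b n : ℕ) : Prop :=
  ∀ r c, a ≤ r → r + 1 < a + n → b ≤ c → c + 1 < b + n → faceSign γ r c = 0

/-- The sign of the walk from `(a, b)` right along row `a` and then down column `c` to `(r, c)`. -/
noncomputable def windowPotential (a b r c : ℕ) : ZMod 2 :=
  ∑ t ∈ Ico b c, hSign γ a t + ∑ t ∈ Ico a r, vSign γ t c

lemma windowPotential_add_succ_row (a b : ℕ) {r : ℕ} (c : ℕ) (hr : a ≤ r) :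
    windowPotential γ a b r c + windowPotential γ a b (r + 1) c = vSign γ r c := by
  simp only [windowPotential, sum_Ico_succ_top hr]
  grind

/-- Even faces let the column part of the potential be moved one column to the right. -/
lemma windowPotential_add_succ_col {a b r c : ℕ} (hr : a ≤ r) (hc : b ≤ c)
    (heven : ∀ t ∈ Ico a r, faceSign γ t c = 0) :
    windowPotential γ a b r c + windowPotential γ a b r (c + 1) = hSign γ r c := by
  have hcols : ∑ t ∈ Ico a r, (vSign γ t c + vSign γ t (c + 1)) = hSign γ a c + hSign γ r c := by
    rw [← sum_Ico_add_succ_of_charTwo (fun t => hSign γ t c) hr]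
    refine sum_congr rfl fun t ht => ?_
    have := heven t ht
    unfold faceSign at this
    grind
  simp only [windowPotential, sum_Ico_succ_top hc, sum_add_distrib] at hcols ⊢
  grind

lemma isSignedSubdivision_of_evenWindow {k a b : ℕ} (ha : a + k ≤ K) (hb : b + k ≤ K)
    (heven : EvenWindow γ a b k) :
    IsSignedSubdivision (gridGraph k) (γ₀ (gridGraph k)) (gridGraph K) γ := by
  refine isSignedSubdivision_of_gridWalks (fun u => (a + u.1, b + u.2))
    (fun u => ⟨by omega, by omega⟩) (fun u u' h => ?_)
    (fun u => windowPotential γ a b (a + u.1) (b + u.2)) (fun _ _ => ∅)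
    (fun _ _ _ _ _ _ _ => Set.disjoint_empty _) (fun _ _ _ _ => Set.notMem_empty _)
    (fun u v huv => ?_)
  · simp only [Prod.mk.injEq, add_right_inj] at h
    exact Prod.ext (Fin.ext h.1) (Fin.ext h.2)
  · have hu1 := u.1.2
    have hu2 := u.2.2
    have hv1 := v.1.2
    have hv2 := v.2.2
    rcases huv with ⟨h1, h2⟩ | ⟨h1, h2⟩
    · refine ⟨1, _, isGridWalk_row (r := a + u.1) (c := b + u.2) (by omega) (by omega), rfl,
        by simp only [h1, h2, add_assoc], ?_, by omega⟩
      rw [walkSign_row, Nat.Ico_succ_singleton, sum_singleton, h1, h2, ← add_assoc,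
        windowPotential_add_succ_col γ (by omega) (by omega)]
      intro t ht
      rw [mem_Ico] at ht
      exact heven _ _ ht.1 (by omega) (by omega) (by omega)
    · refine ⟨1, _, isGridWalk_col (r := a + u.1) (c := b + u.2) (by omega) (by omega), rfl,
        by simp only [h1, h2, add_assoc], ?_, by omega⟩
      rw [walkSign_col, Nat.Ico_succ_singleton, sum_singleton, h1, h2, ← add_assoc,
        windowPotential_add_succ_row γ a b _ (by omega)]

end EvenWindow

/-- From `(a, C)` down column `C` to row `r`, left along row `r` to column `c₁`, down to row
`r + 1`, right back to column `C`, and on down column `C`. -/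
def detourWalk (a r c₁ C t : ℕ) : ℕ × ℕ :=
  if t ≤ r - a then (a + t, C)
  else if t ≤ r - a + (C - c₁) then (r, C - (t - (r - a)))
  else if t ≤ r - a + 2 * (C - c₁) + 1 then (r + 1, c₁ + (t - (r - a + (C - c₁) + 1)))
  else (a + t - 2 * (C - c₁), C)

lemma isGridWalk_detour {K a r c₁ C ℓ : ℕ} (har : a ≤ r) (hrℓ : r < a + ℓ) (hc : c₁ ≤ C)
    (hℓ : a + ℓ < K) (hC : C < K) :
    IsGridWalk K (ℓ + 2 * (C - c₁)) (detourWalk a r c₁ C) where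
  inBox t ht := by unfold detourWalk InBox; split_ifs <;> omega
  injOn t _ s _ h := by
    unfold detourWalk at h; split_ifs at h <;> simp only [Prod.mk.injEq] at h <;> omega
  adj t ht := by unfold detourWalk gridAdj; split_ifs <;> omega

lemma detourWalk_zero (a r c₁ C : ℕ) : detourWalk a r c₁ C 0 = (a, C) := by
  simp [detourWalk]

lemma detourWalk_length {a r c₁ C ℓ : ℕ} (har : a ≤ r) (hrℓ : r < a + ℓ) (hc : c₁ ≤ C) :
    detourWalk a r c₁ C (ℓ + 2 * (C - c₁)) = (a + ℓ, C) := by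
  unfold detourWalk; split_ifs <;> refine Prod.ext ?_ ?_ <;> dsimp only <;> omega

lemma detourWalk_mem_of_lt {a r c₁ C ℓ t : ℕ} (har : a < r) (hrℓ : r + 1 < a + ℓ) (hc : c₁ ≤ C)
    (ht₀ : 0 < t) (ht : t < ℓ + 2 * (C - c₁)) :
    a < (detourWalk a r c₁ C t).1 ∧ (detourWalk a r c₁ C t).1 < a + ℓ ∧
      c₁ ≤ (detourWalk a r c₁ C t).2 ∧ (detourWalk a r c₁ C t).2 ≤ C := by
  unfold detourWalk; split_ifs <;> omega

lemma walkSign_detour {K a r c₁ C ℓ : ℕ} (γ : (gridGraph K).E → ZMod 2) (har : a ≤ r)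
    (hrℓ : r < a + ℓ) (hc : c₁ ≤ C) :
    walkSign γ (ℓ + 2 * (C - c₁)) (detourWalk a r c₁ C) =
      walkSign γ ℓ (fun t => (a + t, C)) + ∑ t ∈ Ico c₁ C, faceSign γ r t := by
  obtain ⟨d, rfl⟩ : ∃ d, r = a + d := ⟨r - a, by omega⟩
  obtain ⟨w, rfl⟩ : ∃ w, C = c₁ + w := ⟨C - c₁, by omega⟩
  obtain ⟨m, rfl⟩ : ∃ m, ℓ = d + 1 + m := ⟨ℓ - d - 1, by omega⟩
  set f := detourWalk a (a + d) c₁ (c₁ + w)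
  have hdown₁ : walkSign γ d f = walkSign γ d (fun t => (a + t, c₁ + w)) :=
    walkSign_congr γ fun t ht => by
      simp only [f, detourWalk]; split_ifs <;> refine Prod.ext ?_ ?_ <;> dsimp only <;> omega
  have hleft : walkSign γ w (fun t => f (d + t)) = walkSign γ w (fun t => (a + d, c₁ + t)) :=
    (walkSign_congr γ (g := fun t => (a + d, c₁ + (w - t))) fun t ht => by
      simp only [f, detourWalk]; split_ifs <;> refine Prod.ext ?_ ?_ <;> dsimp only <;> omega).trans
      (walkSign_reverse γ w fun t => (a + d, c₁ + t))
  have hstep : walkSign γ 1 (fun t => f (d + (w + t))) = walkSign γ 1 (fun t => (a + d + t, c₁)) :=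
    walkSign_congr γ fun t ht => by
      simp only [f, detourWalk]; split_ifs <;> refine Prod.ext ?_ ?_ <;> dsimp only <;> omega
  have hright : walkSign γ w (fun t => f (d + (w + (1 + t)))) =
      walkSign γ w (fun t => (a + d + 1, c₁ + t)) :=
    walkSign_congr γ fun t ht => by
      simp only [f, detourWalk]; split_ifs <;> refine Prod.ext ?_ ?_ <;> dsimp only <;> omega
  have hdown₂ : walkSign γ m (fun t => f (d + (w + (1 + (w + t))))) =
      walkSign γ m (fun t => (a + d + 1 + t, c₁ + w)) :=
    walkSign_congr γ fun t ht => by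
      simp only [f, detourWalk]; split_ifs <;> refine Prod.ext ?_ ?_ <;> dsimp only <;> omega
  have hstraight : walkSign γ (d + 1 + m) (fun t => (a + t, c₁ + w)) =
      walkSign γ d (fun t => (a + t, c₁ + w)) + walkSign γ 1 (fun t => (a + d + t, c₁ + w)) +
        walkSign γ m (fun t => (a + d + 1 + t, c₁ + w)) := by
    simp only [walkSign_add, add_assoc]
  rw [show d + 1 + m + 2 * (c₁ + w - c₁) = d + (w + (1 + (w + m))) by omega, walkSign_add,
    walkSign_add, walkSign_add, walkSign_add, hdown₁, hleft, hstep, hright, hdown₂, hstraight,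
    sum_Ico_faceSign γ _ (Nat.le_add_right c₁ w)]
  simp only [walkSign_row, walkSign_col, Nat.Ico_succ_singleton, sum_singleton]
  grind

/-- Branch vertex `(i, j)` of the `k × k` grid sits at `(stretch k i, stretch k j)`. -/
def stretch (k i : ℕ) : ℕ := i * (k + 1)

lemma stretch_succ (k i : ℕ) : stretch k (i + 1) = stretch k i + (k + 1) := by
  simp [stretch, add_mul]

lemma stretch_one (k : ℕ) : stretch k 1 = k + 1 := one_mul _

lemma stretch_strictMono (k : ℕ) : StrictMono (stretch k) :=
  fun _ _ h => Nat.mul_lt_mul_of_pos_right h k.succ_pos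

lemma stretch_lt_sq {k i : ℕ} (hi : i < k) : stretch k i < k ^ 2 := by
  unfold stretch; nlinarith

lemma stretch_not_between {k i m : ℕ} (h₁ : stretch k i < stretch k m)
    (h₂ : stretch k m < stretch k (i + 1)) : False := by
  rw [(stretch_strictMono k).lt_iff_lt] at h₁ h₂
  omega

def hRegion (k i j : ℕ) : Set (ℕ × ℕ) :=
  {p | p.1 = stretch k i ∧ stretch k j < p.2 ∧ p.2 < stretch k (j + 1)}

def vRegion (k i j : ℕ) : Set (ℕ × ℕ) :=
  {p | stretch k i < p.1 ∧ p.1 < stretch k (i + 1) ∧ stretch k j ≤ p.2 + k ∧ p.2 ≤ stretch k j}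

lemma eq_of_mem_hRegion {k i j i' j' : ℕ} {p : ℕ × ℕ} (hp : p ∈ hRegion k i j)
    (hp' : p ∈ hRegion k i' j') : i = i' ∧ j = j' := by
  obtain ⟨h₁, h₂, h₃⟩ := hp
  obtain ⟨h₁', h₂', h₃'⟩ := hp'
  have hj := (stretch_strictMono k).lt_iff_lt.1 (h₂.trans h₃')
  have hj' := (stretch_strictMono k).lt_iff_lt.1 (h₂'.trans h₃)
  exact ⟨(stretch_strictMono k).injective (h₁.symm.trans h₁'), by omega⟩

lemma eq_of_mem_vRegion {k i j i' j' : ℕ} {p : ℕ × ℕ} (hp : p ∈ vRegion k i j)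
    (hp' : p ∈ vRegion k i' j') : i = i' ∧ j = j' := by
  obtain ⟨h₁, h₂, h₃, h₄⟩ := hp
  obtain ⟨h₁', h₂', h₃', h₄'⟩ := hp'
  have hi := (stretch_strictMono k).lt_iff_lt.1 (h₁.trans h₂')
  have hi' := (stretch_strictMono k).lt_iff_lt.1 (h₁'.trans h₂)
  have hj := (stretch_strictMono k).lt_iff_lt.1 (show stretch k j < stretch k (j' + 1) by
    rw [stretch_succ]; omega)
  have hj' := (stretch_strictMono k).lt_iff_lt.1 (show stretch k j' < stretch k (j + 1) by
    rw [stretch_succ]; omega)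
  omega

lemma disjoint_hRegion_vRegion (k i j i' j' : ℕ) : Disjoint (hRegion k i j) (vRegion k i' j') :=
  Set.disjoint_left.2 fun _ hp hp' => stretch_not_between (hp.1 ▸ hp'.1) (hp.1 ▸ hp'.2.1)

def stepRegion {k : ℕ} (u v : (gridGraph k).V) : Set (ℕ × ℕ) :=
  if v.1.1 = u.1.1 then hRegion k u.1 u.2 else vRegion k u.1 u.2

lemma disjoint_stepRegion {k : ℕ} {u v u' v' : (gridGraph k).V} (huv : IsGridStep u v)
    (hu'v' : IsGridStep u' v') (hne : (u, v) ≠ (u', v')) :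
    Disjoint (stepRegion u v) (stepRegion u' v') := by
  have hext : ∀ {x y : (gridGraph k).V}, x.1.1 = y.1.1 → x.2.1 = y.2.1 → x = y :=
    fun h₁ h₂ => coord_injective (Prod.ext h₁ h₂)
  unfold stepRegion
  rcases huv with ⟨h₁, h₂⟩ | ⟨h₁, h₂⟩ <;> rcases hu'v' with ⟨h₁', h₂'⟩ | ⟨h₁', h₂'⟩ <;>
    simp only [h₁, h₁', if_true, show u.1.1 + 1 ≠ u.1.1 by omega,
      show u'.1.1 + 1 ≠ u'.1.1 by omega, if_false]
  · refine Set.disjoint_left.2 fun p hp hp' => hne ?_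
    obtain ⟨hi, hj⟩ := eq_of_mem_hRegion hp hp'
    rw [hext hi hj, hext (by omega) (by omega : v.2.1 = v'.2.1)]
  · exact disjoint_hRegion_vRegion k _ _ _ _
  · exact (disjoint_hRegion_vRegion k _ _ _ _).symm
  · refine Set.disjoint_left.2 fun p hp hp' => hne ?_
    obtain ⟨hi, hj⟩ := eq_of_mem_vRegion hp hp'
    rw [hext hi hj, hext (by omega : v.1.1 = v'.1.1) (by omega)]

lemma stretch_notMem_stepRegion {k : ℕ} (u v : (gridGraph k).V) (i j : ℕ) :
    (stretch k i, stretch k j) ∉ stepRegion u v := by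
  unfold stepRegion
  split_ifs
  exacts [fun h => stretch_not_between h.2.1 h.2.2, fun h => stretch_not_between h.1 h.2.1]

section OddWindows

variable {K : ℕ} (γ : (gridGraph K).E → ZMod 2)

noncomputable def rowSign (k i j : ℕ) : ZMod 2 :=
  walkSign γ (k + 1) (fun t => (stretch k i, stretch k j + t))

noncomputable def colSign (k i j : ℕ) : ZMod 2 :=
  walkSign γ (k + 1) (fun t => (stretch k i + t, stretch k j))

/-- The sign of the branch paths along the spanning tree made of column `0` and all rows. -/
noncomputable def treePotential (k i j : ℕ) : ZMod 2 :=
  ∑ t ∈ range i, colSign γ k t 0 + ∑ t ∈ range j, rowSign γ k i t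

lemma treePotential_add_succ_right (k i j : ℕ) :
    treePotential γ k i j + treePotential γ k i (j + 1) = rowSign γ k i j := by
  simp only [treePotential, sum_range_succ]
  grind

lemma treePotential_add_succ_down (k i j : ℕ) :
    treePotential γ k i j + treePotential γ k (i + 1) j =
      colSign γ k i 0 + ∑ t ∈ range j, (rowSign γ k i t + rowSign γ k (i + 1) t) := by
  simp only [treePotential, sum_range_succ, sum_add_distrib]
  grind

/-- The walk is straight if its sign is already `s`, and otherwise detours around faces of odd
total sign in the window to the left. -/
lemma exists_walk_vRegion {k i j : ℕ} (hK : k ^ 2 ≤ K) (hi : i + 1 < k) (hj : j < k)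
    {s : ZMod 2}
    (hs : colSign γ k i j = s ∨ 0 < j ∧ ¬ EvenWindow γ (stretch k i + 1) (stretch k j + 1 - k) k) :
    ∃ n f, IsGridWalk K n f ∧ f 0 = (stretch k i, stretch k j) ∧
      f n = (stretch k (i + 1), stretch k j) ∧ walkSign γ n f = s ∧
      ∀ t, 0 < t → t < n → f t ∈ vRegion k i j := by
  have hrow := (stretch_lt_sq hi).trans_le hK
  have hcol := (stretch_lt_sq hj).trans_le hK
  simp only [vRegion, Set.mem_ofPred_eq, stretch_succ] at hrow ⊢
  by_cases hstraight : colSign γ k i j = s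
  · exact ⟨k + 1, _, isGridWalk_col hrow hcol, by simp, rfl, hstraight,
      fun t ht₀ ht => ⟨by omega, by omega, by omega, le_rfl⟩⟩
  obtain ⟨hj₀, hodd⟩ := hs.resolve_left hstraight
  simp only [EvenWindow, not_forall] at hodd
  obtain ⟨r, c, hr₁, hr₂, hc₁, hc₂, hface⟩ := hodd
  have hjk : k + 1 ≤ stretch k j := stretch_one k ▸ (stretch_strictMono k).monotone hj₀
  obtain ⟨c₁, hc₁c, hc₁j, hsum⟩ := exists_sum_Ico_eq_one (f := faceSign γ r)
    (show c < stretch k j by omega) (zmod2_eq_one_of_ne_zero hface)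
  refine ⟨k + 1 + 2 * (stretch k j - c₁), detourWalk (stretch k i) r c₁ (stretch k j),
    isGridWalk_detour (by omega) (by omega) hc₁j.le hrow hcol, detourWalk_zero ..,
    detourWalk_length (by omega) (by omega) hc₁j.le, ?_, fun t ht₀ ht => ?_⟩
  · rw [walkSign_detour γ (by omega) (by omega) hc₁j.le, hsum]
    exact zmod2_add_one_eq_of_ne hstraight
  · have := detourWalk_mem_of_lt (a := stretch k i) (r := r) (C := stretch k j) (ℓ := k + 1)
      (by omega) (by omega) hc₁j.le ht₀ ht
    omega

lemma isSignedSubdivision_of_not_evenWindow {k : ℕ} (hK : k ^ 2 ≤ K)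
    (hodd : ∀ i j, i + 1 < k → 0 < j → j < k →
      ¬ EvenWindow γ (stretch k i + 1) (stretch k j + 1 - k) k) :
    IsSignedSubdivision (gridGraph k) (γ₀ (gridGraph k)) (gridGraph K) γ := by
  have hlt : ∀ {i}, i < k → stretch k i < K := fun hi => (stretch_lt_sq hi).trans_le hK
  refine isSignedSubdivision_of_gridWalks (fun u => (stretch k u.1, stretch k u.2))
    (fun u => ⟨hlt u.1.2, hlt u.2.2⟩) (fun u u' h => ?_) (fun u => treePotential γ k u.1 u.2)
    stepRegion (fun _ _ _ _ => disjoint_stepRegion)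
    (fun u v _ _ => stretch_notMem_stepRegion u v _ _) (fun u v huv => ?_)
  · simp only [Prod.mk.injEq, (stretch_strictMono k).injective.eq_iff] at h
    exact coord_injective (Prod.ext h.1 h.2)
  rcases huv with ⟨h₁, h₂⟩ | ⟨h₁, h₂⟩
  · have hj := v.2.2
    refine ⟨k + 1, fun t => (stretch k u.1, stretch k u.2 + t), isGridWalk_row (hlt u.1.2) ?_,
      by simp, by simp [h₁, h₂, stretch_succ], ?_, fun t ht₀ ht => ?_⟩
    · rw [← stretch_succ, ← h₂]; exact hlt v.2.2
    · rw [h₁, h₂, treePotential_add_succ_right]; rfl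
    · simp only [stepRegion, h₁, if_true, hRegion, Set.mem_ofPred_eq, stretch_succ, true_and]
      omega
  · have hi := v.1.2
    have hs : colSign γ k u.1 u.2 = treePotential γ k u.1 u.2 + treePotential γ k v.1 v.2 ∨
        0 < u.2.1 ∧ ¬ EvenWindow γ (stretch k u.1 + 1) (stretch k u.2 + 1 - k) k := by
      rw [h₁, h₂, treePotential_add_succ_down]
      rcases Nat.eq_zero_or_pos u.2.1 with hj | hj
      · simp [hj, colSign]
      · exact Or.inr ⟨hj, hodd _ _ (by omega) hj u.2.2⟩
    obtain ⟨n, f, hf, hf₀, hfn, hsign, hreg⟩ :=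
      exists_walk_vRegion γ hK (show u.1.1 + 1 < k by omega) u.2.2 hs
    refine ⟨n, f, hf, hf₀, by rw [hfn, h₁, h₂], hsign, fun t ht₀ ht => ?_⟩
    simpa only [stepRegion, h₁, show u.1.1 + 1 ≠ u.1.1 by omega, if_false] using hreg t ht₀ ht

end OddWindows

end Grid

/-- Any signing of the `k² × k²` grid contains the all-even
`k × k` grid as a subdivision. -/
theorem statement_3 (k : ℕ) (γ : (gridGraph (k ^ 2)).E → ZMod 2) :
    IsSignedSubdivision (gridGraph k) (γ₀ (gridGraph k)) (gridGraph (k ^ 2)) γ := by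
  by_cases hodd : ∀ i j, i + 1 < k → 0 < j → j < k →
      ¬ EvenWindow γ (stretch k i + 1) (stretch k j + 1 - k) k
  · exact isSignedSubdivision_of_not_evenWindow γ le_rfl hodd
  push Not at hodd
  obtain ⟨i, j, hi, hj₀, hj, heven⟩ := hodd
  have hrow := stretch_lt_sq hi
  have hcol := stretch_lt_sq hj
  have hj₁ : stretch k 1 ≤ stretch k j := (stretch_strictMono k).monotone hj₀
  rw [stretch_succ] at hrow
  rw [stretch_one] at hj₁
  exact isSignedSubdivision_of_evenWindow γ (by omega) (by omega) heven

end TDMPaper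
end

section
/- For any γ: (1) if a graph G forbids the k×k grid as a minor, then the signed graph (G,γ) forbids the k×k even grid (the k×k grid with all edges labeled 0) as a signed graph minor; (2) conversely, if (G,γ) forbids the k×k even grid as a signed graph minor, then G forbids the k²×k² grid as a minor. -/
namespace TDMPaper

open MGraph

/-!
Part (1) holds because forgetting the signs turns a signed minor model into a minor model.

For part (2), a minor model of the `k² × k²` grid in `G` becomes a signed one after shifting
along a spanning tree of every branch set; the signs of the model edges then define a signing
of the big grid whose signed minors are signed minors of `(G, γ)`. So it suffices to find the
even `k × k` grid in every signed `k² × k²` grid. Shift so that all horizontal edges are even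
and cut the grid into `k × k` blocks. If some block outside the last block row has only even
cells, it is balanced, and after one more shift it is an even `k × k` grid. Otherwise each
such block contains an odd cell. The branch set of block `(i, j)` is the top row of the block
together with a connector to the next block row which runs down one column and jogs to the
next column in one of the two rows of the odd cell, chosen so that the connector is even.
Summing signs along the connectors gives a potential that makes the branch sets and the
model edges even.
-/

open Finset Relation

lemma eq_of_mem_of_pairwise_disjoint {ι α : Type} {S : ι → Set α}
    (hS : ∀ i j, i ≠ j → Disjoint (S i) (S j)) ⦃x : α⦄ ⦃i j : ι⦄ (hi : x ∈ S i)
    (hj : x ∈ S j) : i = j := by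
  by_contra hij
  exact Set.disjoint_left.mp (hS i j hij) hi hj

lemma exists_eqOn_of_pairwise_disjoint {ι α β : Type} [Inhabited β] (S : ι → Set α)
    (hS : ∀ i j, i ≠ j → Disjoint (S i) (S j)) (f : ι → α → β) :
    ∃ g : α → β, ∀ i, Set.EqOn g (f i) (S i) := by
  classical
  refine ⟨fun x => if h : ∃ i, x ∈ S i then f h.choose x else default, fun i x hx => ?_⟩
  have h : ∃ i, x ∈ S i := ⟨i, hx⟩
  simp only [dif_pos h, eq_of_mem_of_pairwise_disjoint hS h.choose_spec hx]

lemma exists_mem_notMem_of_reflTransGen {α : Type} {r : α → α → Prop} {S : Set α} {a b : α}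
    (h : ReflTransGen r a b) (ha : a ∈ S) (hb : b ∉ S) : ∃ x ∈ S, ∃ y ∉ S, r x y := by
  induction h with
  | refl => exact absurd ha hb
  | @tail c d _ hcd ih =>
    by_cases hc : c ∈ S
    · exact ⟨c, hc, d, hb, hcd⟩
    · exact ih hc

lemma reflTransGen_of_forall_succ {α : Type} {r : α → α → Prop} (f : ℕ → α) {a b : ℕ}
    (hab : a ≤ b) (h : ∀ t, a ≤ t → t < b → r (f t) (f (t + 1))) : ReflTransGen r (f a) (f b) :=
  ReflTransGen.lift f (fun _ _ h => h) _ _ (reflTransGen_of_succ_of_le (fun s t => r (f s) (f t))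
    (fun t ht => by rw [Order.succ_eq_add_one]; exact h t ht.1 ht.2) hab)

lemma div_eq_of_mem_block {i k x : ℕ} (h₁ : i * k ≤ x) (h₂ : x < i * k + k) : x / k = i :=
  Nat.div_eq_of_lt_le h₁ (by rw [add_one_mul]; exact h₂)

lemma mul_add_le_mul_self {i k : ℕ} (h : i < k) : i * k + k ≤ k * k := by
  nlinarith

namespace MGraph

variable {G : MGraph}

noncomputable def shiftSign (G : MGraph) (γ : G.E → ZMod 2) (σ : G.V → ZMod 2) :
    G.E → ZMod 2 :=
  fun e => γ e + σ (G.ep1 e) + σ (G.ep2 e)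

lemma shiftSign_eq (γ : G.E → ZMod 2) (σ : G.V → ZMod 2) {e : G.E} {u v : G.V}
    (h : G.ends e = s(u, v)) : G.shiftSign γ σ e = γ e + σ u + σ v := by
  have h' := G.ends_ep e
  rw [h, Sym2.eq_iff] at h'
  rcases h' with ⟨rfl, rfl⟩ | ⟨rfl, rfl⟩
  · rfl
  · exact add_right_comm _ _ _

def AdjIn (G : MGraph) (B : Set G.V) (x y : G.V) : Prop :=
  x ∈ B ∧ y ∈ B ∧ ∃ e, G.ends e = s(x, y)

def EvenAdjIn (G : MGraph) (γ : G.E → ZMod 2) (B : Set G.V) (x y : G.V) : Prop :=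
  x ∈ B ∧ y ∈ B ∧ ∃ e, γ e = 0 ∧ G.ends e = s(x, y)

instance (γ : G.E → ZMod 2) (B : Set G.V) : Std.Symm (G.EvenAdjIn γ B) :=
  ⟨fun _ _ ⟨hx, hy, e, he, hends⟩ => ⟨hy, hx, e, he, hends.trans Sym2.eq_swap⟩⟩

lemma reflTransGen_evenAdjIn_of_root {γ : G.E → ZMod 2} {B : Set G.V} {r : G.V}
    (hr : ∀ a ∈ B, ReflTransGen (G.EvenAdjIn γ B) r a) :
    ∀ a ∈ B, ∀ b ∈ B, ReflTransGen (G.EvenAdjIn γ B) a b :=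
  fun a ha b hb => (ReflTransGen.stdSymm.symm _ _ (hr a ha)).trans (hr b hb)

lemma exists_shiftSign_reflTransGen_insert (γ : G.E → ZMod 2) {B S : Set G.V} {r : G.V}
    (hB : ∀ a ∈ B, ReflTransGen (G.AdjIn B) r a) (hrS : r ∈ S) (hBS : ¬ B ⊆ S) (σ : G.V → ZMod 2)
    (hσ : ∀ a ∈ S, ReflTransGen (G.EvenAdjIn (G.shiftSign γ σ) S) r a) :
    ∃ y ∈ B, y ∉ S ∧ ∃ σ' : G.V → ZMod 2,
      ∀ a ∈ insert y S, ReflTransGen (G.EvenAdjIn (G.shiftSign γ σ') (insert y S)) r a := by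
  classical
  obtain ⟨z, hzB, hzS⟩ := Set.not_subset.mp hBS
  obtain ⟨x, hxS, y, hyS, -, hyB, e, he⟩ := exists_mem_notMem_of_reflTransGen (hB z hzB) hrS hzS
  set σ' := Function.update σ y (γ e + σ x)
  have hσ' : ∀ p ∈ S, σ' p = σ p := fun p hp =>
    Function.update_of_ne (ne_of_mem_of_not_mem hp hyS) _ _
  have old : ∀ a ∈ S, ReflTransGen (G.EvenAdjIn (G.shiftSign γ σ') (insert y S)) r a := by
    refine fun a ha => ReflTransGen.mono ?_ _ _ (hσ a ha)
    rintro p q ⟨hp, hq, e', he', hpq⟩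
    refine ⟨Set.mem_insert_of_mem _ hp, Set.mem_insert_of_mem _ hq, e', ?_, hpq⟩
    rwa [shiftSign_eq _ _ hpq, hσ' p hp, hσ' q hq, ← shiftSign_eq _ _ hpq]
  refine ⟨y, hyB, hyS, σ', fun a ha => ?_⟩
  rcases Set.mem_insert_iff.mp ha with rfl | haS
  · refine (old x hxS).tail ⟨Set.mem_insert_of_mem _ hxS, Set.mem_insert _ _, e, ?_, he⟩
    rw [shiftSign_eq _ _ he, hσ' x hxS, show σ' a = γ e + σ x from Function.update_self ..]
    grind
  · exact old a haS

lemma exists_shiftSign_reflTransGen (γ : G.E → ZMod 2) {B : Set G.V} {r : G.V} (hr : r ∈ B)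
    (hB : ∀ a ∈ B, ReflTransGen (G.AdjIn B) r a) :
    ∃ σ : G.V → ZMod 2, ∀ a ∈ B, ReflTransGen (G.EvenAdjIn (G.shiftSign γ σ) B) r a := by
  suffices ∀ m S, (B \ S).ncard = m → r ∈ S → S ⊆ B → (∃ σ : G.V → ZMod 2,
      ∀ a ∈ S, ReflTransGen (G.EvenAdjIn (G.shiftSign γ σ) S) r a) →
      ∃ σ : G.V → ZMod 2, ∀ a ∈ B, ReflTransGen (G.EvenAdjIn (G.shiftSign γ σ) B) r a from
    this _ {r} rfl rfl (Set.singleton_subset_iff.mpr hr)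
      ⟨0, fun a ha => by rw [Set.mem_singleton_iff.mp ha]⟩
  intro m
  induction m using Nat.strong_induction_on with
  | _ m ih =>
    rintro S rfl hrS hSB ⟨σ, hσ⟩
    by_cases hBS : B ⊆ S
    · exact ⟨σ, by rwa [hSB.antisymm hBS] at hσ⟩
    obtain ⟨y, hyB, hyS, σ', hσ'⟩ := exists_shiftSign_reflTransGen_insert γ hB hrS hBS σ hσ
    refine ih _ ?_ _ rfl (Set.mem_insert_of_mem _ hrS) (Set.insert_subset hyB hSB) ⟨σ', hσ'⟩
    have hdiff : B \ insert y S = (B \ S) \ {y} := by rw [Set.sdiff_sdiff, Set.union_singleton]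
    exact hdiff ▸ Set.ncard_sdiff_singleton_lt_of_mem ⟨hyB, hyS⟩ (Set.toFinite _)

end MGraph

open MGraph

lemma isShift_shiftSign (G : MGraph) (γ : G.E → ZMod 2) (σ : G.V → ZMod 2) :
    IsShift G γ (G.shiftSign γ σ) :=
  ⟨σ, fun _ _ _ h => shiftSign_eq γ σ h⟩

lemma IsShift.trans {G : MGraph} {γ γ' γ'' : G.E → ZMod 2} (h : IsShift G γ γ')
    (h' : IsShift G γ' γ'') : IsShift G γ γ'' := by
  obtain ⟨σ, hσ⟩ := h
  obtain ⟨τ, hτ⟩ := h'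
  exact ⟨σ + τ, fun e u v he => by rw [hτ e u v he, hσ e u v he]; simp only [Pi.add_apply]; ring⟩

def SignedMinorModel.toMinorModel {H G : MGraph} {γH : H.E → ZMod 2} {γG : G.E → ZMod 2}
    (M : SignedMinorModel H G γH γG) : MinorModel H G where
  bs := M.bs
  em := M.em
  bs_nonempty := M.bs_nonempty
  bs_disjoint := M.bs_disjoint
  bs_connected v a ha b hb :=
    ReflTransGen.mono (fun _ _ ⟨hx, hy, e, _, he⟩ => ⟨hx, hy, e, he⟩) _ _
      (M.bs_connected v a ha b hb)
  em_inj := M.em_inj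
  em_ends := M.em_ends

lemma IsSignedMinor.isMinor {H G : MGraph} {γH : H.E → ZMod 2} {γG : G.E → ZMod 2}
    (h : IsSignedMinor H γH G γG) : IsMinor H G :=
  h.elim fun M => ⟨M.toMinorModel⟩

lemma reflTransGen_evenAdjIn_biUnion {H G : MGraph} {γH : H.E → ZMod 2} {γ : G.E → ZMod 2}
    {bs : H.V → Set G.V} {T : Set H.V}
    (hin : ∀ b, ∀ x ∈ bs b, ∀ y ∈ bs b, ReflTransGen (G.EvenAdjIn γ (bs b)) x y)
    (hedge : ∀ eH u v, H.ends eH = s(u, v) → γH eH = 0 →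
      ∃ x ∈ bs u, ∃ y ∈ bs v, ∃ e, γ e = 0 ∧ G.ends e = s(x, y))
    {b b' : H.V} (hbb' : ReflTransGen (H.EvenAdjIn γH T) b b') (hb : b ∈ T) :
    ∀ x ∈ bs b, ∀ y ∈ bs b', ReflTransGen (G.EvenAdjIn γ (⋃ c ∈ T, bs c)) x y := by
  have within : ∀ c ∈ T, ∀ x ∈ bs c, ∀ y ∈ bs c,
      ReflTransGen (G.EvenAdjIn γ (⋃ c ∈ T, bs c)) x y := fun c hc x hx y hy =>
    ReflTransGen.mono (fun _ _ ⟨hp, hq, he⟩ => ⟨Set.mem_biUnion hc hp, Set.mem_biUnion hc hq, he⟩)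
      _ _ (hin c x hx y hy)
  induction hbb' with
  | refl => exact within b hb
  | tail _ hstep ih =>
    obtain ⟨hc, hd, eH, h0, hends⟩ := hstep
    obtain ⟨p, hp, q, hq, e, he, hpq⟩ := hedge eH _ _ hends h0
    exact fun x hx y hy => ((ih x hx p hp).tail ⟨Set.mem_biUnion hc hp, Set.mem_biUnion hd hq,
      e, he, hpq⟩).trans (within _ hd q hq y hy)

lemma IsSignedMinor.of_isShift {H G : MGraph} {γH γH' : H.E → ZMod 2} {γG : G.E → ZMod 2}
    (h : IsSignedMinor H γH G γG) (hs : IsShift H γH γH') : IsSignedMinor H γH' G γG := by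
  obtain ⟨M⟩ := h
  obtain ⟨σH, hσH⟩ := hs
  obtain ⟨τ, hτ⟩ := exists_eqOn_of_pairwise_disjoint M.bs M.bs_disjoint fun b _ => σH b
  refine ⟨{ M with
    γ' := G.shiftSign M.γ' τ
    shift := M.shift.trans (isShift_shiftSign G M.γ' τ)
    bs_connected := fun b x hx y hy => ?_
    em_parity := fun eH => ?_ }⟩
  · refine ReflTransGen.mono ?_ _ _ (M.bs_connected b x hx y hy)
    rintro p q ⟨hp, hq, e, he, hpq⟩
    refine ⟨hp, hq, e, ?_, hpq⟩
    rw [shiftSign_eq _ _ hpq, hτ b hp, hτ b hq, he, zero_add, CharTwo.add_self_eq_zero]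
  · obtain ⟨a, ha, b, hb, hab⟩ := M.em_ends eH _ _ (H.ends_ep eH)
    rw [shiftSign_eq _ _ hab, hτ _ ha, hτ _ hb, M.em_parity, hσH eH _ _ (H.ends_ep eH)]

lemma IsSignedMinor.trans {K H G : MGraph} {γK : K.E → ZMod 2} {γH : H.E → ZMod 2}
    {γG : G.E → ZMod 2} (hKH : IsSignedMinor K γK H γH) (hHG : IsSignedMinor H γH G γG) :
    IsSignedMinor K γK G γG := by
  obtain ⟨S⟩ := hKH
  obtain ⟨M⟩ := hHG.of_isShift S.shift
  refine ⟨{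
    γ' := M.γ'
    shift := M.shift
    bs := fun v => ⋃ b ∈ S.bs v, M.bs b
    em := M.em ∘ S.em
    bs_nonempty := fun v => ?_
    bs_disjoint := fun u v huv => ?_
    bs_connected := fun v a ha c hc => ?_
    em_inj := M.em_inj.comp S.em_inj
    em_ends := fun eK u v h => ?_
    em_parity := fun eK => (M.em_parity _).trans (S.em_parity eK) }⟩
  · obtain ⟨b, hb⟩ := S.bs_nonempty v
    obtain ⟨x, hx⟩ := M.bs_nonempty b
    exact ⟨x, Set.mem_biUnion hb hx⟩
  · refine Set.disjoint_left.mpr fun x hxu hxv => ?_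
    obtain ⟨b, hb, hxb⟩ := Set.mem_iUnion₂.mp hxu
    obtain ⟨b', hb', hxb'⟩ := Set.mem_iUnion₂.mp hxv
    cases eq_of_mem_of_pairwise_disjoint M.bs_disjoint hxb hxb'
    exact huv (eq_of_mem_of_pairwise_disjoint S.bs_disjoint hb hb')
  · obtain ⟨b, hb, hab⟩ := Set.mem_iUnion₂.mp ha
    obtain ⟨b', hb', hcb'⟩ := Set.mem_iUnion₂.mp hc
    refine reflTransGen_evenAdjIn_biUnion M.bs_connected (fun eH u v h h0 => ?_)
      (S.bs_connected v b hb b' hb') hb a hab c hcb'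
    obtain ⟨p, hp, q, hq, hpq⟩ := M.em_ends eH u v h
    exact ⟨p, hp, q, hq, M.em eH, (M.em_parity eH).trans h0, hpq⟩
  · obtain ⟨b, hb, b', hb', hbb'⟩ := S.em_ends eK u v h
    obtain ⟨p, hp, q, hq, hpq⟩ := M.em_ends (S.em eK) b b' hbb'
    exact ⟨p, Set.mem_biUnion hb hp, q, Set.mem_biUnion hb' hq, hpq⟩

lemma isSignedMinor_self_of_isShift {G : MGraph} {γ γ' : G.E → ZMod 2} (h : IsShift G γ γ') :
    IsSignedMinor G γ' G γ :=
  ⟨{ γ' := γ'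
     shift := h
     bs := fun v => {v}
     em := id
     bs_nonempty := fun v => Set.singleton_nonempty v
     bs_disjoint := fun _ _ huv => Set.disjoint_singleton.mpr huv
     bs_connected := fun _ a ha b hb => by rw [ha, hb]
     em_inj := Function.injective_id
     em_ends := fun e u v h => ⟨u, rfl, v, rfl, h⟩
     em_parity := fun _ => rfl }⟩

lemma MinorModel.exists_isSignedMinor {H G : MGraph} (M : MinorModel H G) (γ : G.E → ZMod 2) :
    ∃ γH : H.E → ZMod 2, IsSignedMinor H γH G γ := by
  choose τ hτ using fun b => exists_shiftSign_reflTransGen γ (M.bs_nonempty b).some_mem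
    fun a ha => M.bs_connected b _ (M.bs_nonempty b).some_mem a ha
  obtain ⟨σ, hσ⟩ := exists_eqOn_of_pairwise_disjoint M.bs M.bs_disjoint τ
  have hconn : ∀ b, ∀ a ∈ M.bs b,
      ReflTransGen (G.EvenAdjIn (G.shiftSign γ σ) (M.bs b)) (M.bs_nonempty b).some a := by
    refine fun b a ha => ReflTransGen.mono ?_ _ _ (hτ b a ha)
    rintro p q ⟨hp, hq, e, he, hpq⟩
    refine ⟨hp, hq, e, ?_, hpq⟩
    rwa [shiftSign_eq _ _ hpq, hσ b hp, hσ b hq, ← shiftSign_eq _ _ hpq]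
  exact ⟨_, ⟨{
    γ' := G.shiftSign γ σ
    shift := isShift_shiftSign G γ σ
    bs := M.bs
    em := M.em
    bs_nonempty := M.bs_nonempty
    bs_disjoint := M.bs_disjoint
    bs_connected := fun b => reflTransGen_evenAdjIn_of_root (hconn b)
    em_inj := M.em_inj
    em_ends := M.em_ends
    em_parity := fun _ => rfl }⟩⟩

lemma isSignedMinor_of_forall_exists_edge {H G : MGraph} (hH : Function.Injective H.ends)
    {γH : H.E → ZMod 2} {γG γ' : G.E → ZMod 2} (hγ' : IsShift G γG γ') (bs : H.V → Set G.V)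
    (hdisj : ∀ u v, u ≠ v → Disjoint (bs u) (bs v))
    (hroot : ∀ v, ∃ r ∈ bs v, ∀ a ∈ bs v, ReflTransGen (G.EvenAdjIn γ' (bs v)) r a)
    (hedge : ∀ eH u v, H.ends eH = s(u, v) →
      ∃ a ∈ bs u, ∃ b ∈ bs v, ∃ e, G.ends e = s(a, b) ∧ γ' e = γH eH) :
    IsSignedMinor H γH G γG := by
  choose r hr hroot using hroot
  choose a ha b hb em hem hpar using fun eH => hedge eH _ _ (H.ends_ep eH)
  have hbs := eq_of_mem_of_pairwise_disjoint hdisj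
  refine ⟨{
    γ' := γ'
    shift := hγ'
    bs := bs
    em := em
    bs_nonempty := fun v => ⟨r v, hr v⟩
    bs_disjoint := hdisj
    bs_connected := fun v => reflTransGen_evenAdjIn_of_root (hroot v)
    em_inj := fun e e' h => hH ?_
    em_ends := fun eH u v h => ?_
    em_parity := hpar }⟩
  · have hends := (hem e).symm.trans (h ▸ hem e')
    rw [H.ends_ep e, H.ends_ep e']
    rcases Sym2.eq_iff.mp hends with ⟨h1, h2⟩ | ⟨h1, h2⟩
    · rw [hbs (ha e) (h1 ▸ ha e'), hbs (hb e) (h2 ▸ hb e')]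
    · rw [hbs (ha e) (h1 ▸ hb e'), hbs (hb e) (h2 ▸ ha e'), Sym2.eq_swap]
  · rcases Sym2.eq_iff.mp ((H.ends_ep eH).symm.trans h) with ⟨rfl, rfl⟩ | ⟨rfl, rfl⟩
    · exact ⟨a eH, ha eH, b eH, hb eH, hem eH⟩
    · exact ⟨b eH, hb eH, a eH, ha eH, (hem eH).trans Sym2.eq_swap⟩

section Grid

variable {n : ℕ}

def gridCoord (p : (gridGraph n).V) : ℕ × ℕ := (p.1.1, p.2.1)

lemma gridCoord_injective : Function.Injective (gridCoord (n := n)) := fun p q h => by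
  simp only [gridCoord, Prod.mk.injEq] at h
  exact Prod.ext (Fin.ext h.1) (Fin.ext h.2)

lemma exists_gridCoord_eq {a : ℕ × ℕ} (h : a.1 < n ∧ a.2 < n) :
    ∃ x : (gridGraph n).V, gridCoord x = a :=
  ⟨(⟨a.1, h.1⟩, ⟨a.2, h.2⟩), rfl⟩

lemma gridAdj_comm_s4 {a b : ℕ × ℕ} : gridAdj a b ↔ gridAdj b a := by
  unfold gridAdj; omega

lemma gridGraph_ends_injective : Function.Injective (gridGraph n).ends :=
  Subtype.val_injective

lemma gridAdj_of_ends_eq {e : (gridGraph n).E} {x y : (gridGraph n).V}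
    (h : (gridGraph n).ends e = s(x, y)) : gridAdj (gridCoord x) (gridCoord y) := by
  obtain ⟨a, b, hab, he⟩ := e.2
  rcases Sym2.eq_iff.mp (he.symm.trans h) with ⟨rfl, rfl⟩ | ⟨rfl, rfl⟩
  · exact hab
  · exact gridAdj_comm_s4.mp hab

lemma exists_ends_eq_of_gridAdj {x y : (gridGraph n).V} (h : gridAdj (gridCoord x) (gridCoord y)) :
    ∃ e, (gridGraph n).ends e = s(x, y) :=
  ⟨⟨s(x, y), x, y, h, rfl⟩, rfl⟩

/-- The sign of the grid edge between the points with coordinates `a` and `b`, and `0` if there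
is no such edge. -/
noncomputable def gridEdgeVal (γ : (gridGraph n).E → ZMod 2) (a b : ℕ × ℕ) : ZMod 2 :=
  open Classical in
  if h : ∃ e : (gridGraph n).E, ∃ x y, (gridGraph n).ends e = s(x, y) ∧
      gridCoord x = a ∧ gridCoord y = b then γ h.choose else 0

variable (γ : (gridGraph n).E → ZMod 2)

lemma apply_eq_gridEdgeVal {e : (gridGraph n).E} {x y : (gridGraph n).V}
    (he : (gridGraph n).ends e = s(x, y)) : γ e = gridEdgeVal γ (gridCoord x) (gridCoord y) := by
  have h : ∃ e : (gridGraph n).E, ∃ x' y', (gridGraph n).ends e = s(x', y') ∧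
      gridCoord x' = gridCoord x ∧ gridCoord y' = gridCoord y := ⟨e, x, y, he, rfl, rfl⟩
  obtain ⟨x', y', he', hx, hy⟩ := h.choose_spec
  rw [gridEdgeVal, dif_pos h, gridGraph_ends_injective (he.trans (he'.trans
    (by rw [gridCoord_injective hx, gridCoord_injective hy])).symm)]

lemma gridEdgeVal_comm (a b : ℕ × ℕ) : gridEdgeVal γ a b = gridEdgeVal γ b a := by
  by_cases h : ∃ e : (gridGraph n).E, ∃ x y, (gridGraph n).ends e = s(x, y) ∧
      gridCoord x = a ∧ gridCoord y = b
  · obtain ⟨e, x, y, he, rfl, rfl⟩ := h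
    rw [← apply_eq_gridEdgeVal γ he, ← apply_eq_gridEdgeVal γ (he.trans Sym2.eq_swap)]
  · have h' : ¬ ∃ e : (gridGraph n).E, ∃ x y, (gridGraph n).ends e = s(x, y) ∧
        gridCoord x = b ∧ gridCoord y = a := fun ⟨e, x, y, he, hx, hy⟩ =>
      h ⟨e, y, x, he.trans Sym2.eq_swap, hy, hx⟩
    rw [gridEdgeVal, dif_neg h, gridEdgeVal, dif_neg h']

noncomputable def vertVal (x y : ℕ) : ZMod 2 := gridEdgeVal γ (x, y) (x + 1, y)

def IsEvenGridEdge (σ : ℕ × ℕ → ZMod 2) (a b : ℕ × ℕ) : Prop :=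
  gridAdj a b ∧ gridEdgeVal γ a b + σ a + σ b = 0

def EvenGridStepIn (σ : ℕ × ℕ → ZMod 2) (S : Set (ℕ × ℕ)) (a b : ℕ × ℕ) : Prop :=
  a ∈ S ∧ b ∈ S ∧ IsEvenGridEdge γ σ a b

variable {γ}

lemma IsEvenGridEdge.symm {σ : ℕ × ℕ → ZMod 2} {a b : ℕ × ℕ}
    (h : IsEvenGridEdge γ σ a b) : IsEvenGridEdge γ σ b a :=
  ⟨gridAdj_comm_s4.mp h.1, by rw [gridEdgeVal_comm, ← h.2]; ring⟩

lemma exists_shiftSign_eq_zero {σ : ℕ × ℕ → ZMod 2} {x y : (gridGraph n).V}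
    (h : IsEvenGridEdge γ σ (gridCoord x) (gridCoord y)) :
    ∃ e, (gridGraph n).shiftSign γ (σ ∘ gridCoord) e = 0 ∧ (gridGraph n).ends e = s(x, y) := by
  obtain ⟨e, he⟩ := exists_ends_eq_of_gridAdj h.1
  exact ⟨e, by rw [shiftSign_eq _ _ he, apply_eq_gridEdgeVal γ he]; exact h.2, he⟩

lemma reflTransGen_evenAdjIn_of_evenGridStepIn {σ : ℕ × ℕ → ZMod 2} {S : Set (ℕ × ℕ)}
    (hS : ∀ a ∈ S, a.1 < n ∧ a.2 < n) {x y : (gridGraph n).V}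
    (h : ReflTransGen (EvenGridStepIn γ σ S) (gridCoord x) (gridCoord y)) :
    ReflTransGen ((gridGraph n).EvenAdjIn ((gridGraph n).shiftSign γ (σ ∘ gridCoord))
      (gridCoord ⁻¹' S)) x y := by
  generalize hb : gridCoord y = b at h
  induction h generalizing y with
  | refl => rw [gridCoord_injective hb]
  | tail _ hstep ih =>
    obtain ⟨z, rfl⟩ := exists_gridCoord_eq (hS _ hstep.1)
    subst hb
    obtain ⟨e, he, hends⟩ := exists_shiftSign_eq_zero hstep.2.2
    exact (ih rfl).tail ⟨hstep.1, hstep.2.1, e, he, hends⟩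

end Grid

lemma isSignedMinor_evenGrid_of_blocks {k n : ℕ} (γ : (gridGraph n).E → ZMod 2)
    (B : ℕ × ℕ → Set (ℕ × ℕ)) (σ : ℕ × ℕ → ZMod 2)
    (hbox : ∀ v : (gridGraph k).V, ∀ a ∈ B (gridCoord v), a.1 < n ∧ a.2 < n)
    (hdisj : ∀ u v : (gridGraph k).V, u ≠ v → Disjoint (B (gridCoord u)) (B (gridCoord v)))
    (hroot : ∀ v : (gridGraph k).V, ∃ r ∈ B (gridCoord v), ∀ a ∈ B (gridCoord v),
      ReflTransGen (EvenGridStepIn γ σ (B (gridCoord v))) r a)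
    (hhor : ∀ i j, i < k → j + 1 < k → ∃ a ∈ B (i, j), ∃ b ∈ B (i, j + 1), IsEvenGridEdge γ σ a b)
    (hver : ∀ i j, i + 1 < k → j < k → ∃ a ∈ B (i, j), ∃ b ∈ B (i + 1, j), IsEvenGridEdge γ σ a b) :
    IsSignedMinor (gridGraph k) (γ₀ (gridGraph k)) (gridGraph n) γ := by
  refine isSignedMinor_of_forall_exists_edge gridGraph_ends_injective
    (isShift_shiftSign _ γ (σ ∘ gridCoord)) (fun v => gridCoord ⁻¹' B (gridCoord v))
    (fun u v huv => (hdisj u v huv).preimage _) (fun v => ?_) (fun eH u v huv => ?_)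
  · obtain ⟨r, hr, hreach⟩ := hroot v
    obtain ⟨x, rfl⟩ := exists_gridCoord_eq (hbox v r hr)
    refine ⟨x, hr, fun a ha => reflTransGen_evenAdjIn_of_evenGridStepIn (hbox v) (hreach _ ha)⟩
  · suffices ∃ a ∈ B (gridCoord u), ∃ b ∈ B (gridCoord v), IsEvenGridEdge γ σ a b by
      obtain ⟨a, ha, b, hb, hab⟩ := this
      obtain ⟨x, rfl⟩ := exists_gridCoord_eq (hbox u a ha)
      obtain ⟨y, rfl⟩ := exists_gridCoord_eq (hbox v b hb)
      obtain ⟨e, he, hends⟩ := exists_shiftSign_eq_zero hab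
      exact ⟨x, ha, y, hb, e, hends, he⟩
    have hu := u.1.2
    have hu' := u.2.2
    have hv := v.1.2
    have hv' := v.2.2
    have hadj := gridAdj_of_ends_eq huv
    simp only [gridAdj, gridCoord] at hadj ⊢
    rcases hadj with ⟨h1, h2 | h2⟩ | ⟨h1, h2 | h2⟩
    · rw [← h1, ← h2]
      exact hhor _ _ hu (by omega)
    · obtain ⟨a, ha, b, hb, hab⟩ := hhor (v.1 : ℕ) v.2 hv (by omega)
      rw [h1, ← h2]
      exact ⟨b, hb, a, ha, hab.symm⟩
    · rw [← h1, ← h2]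
      exact hver _ _ (by omega) hu'
    · obtain ⟨a, ha, b, hb, hab⟩ := hver (v.1 : ℕ) v.2 (by omega) hv'
      rw [h1, ← h2]
      exact ⟨b, hb, a, ha, hab.symm⟩

def IsRowEven {n : ℕ} (γ : (gridGraph n).E → ZMod 2) : Prop :=
  ∀ x y, gridEdgeVal γ (x, y) (x, y + 1) = 0

lemma exists_isShift_rowEven {n : ℕ} (γ : (gridGraph n).E → ZMod 2) :
    ∃ γ', IsShift (gridGraph n) γ γ' ∧ IsRowEven γ' := by
  let σ : ℕ × ℕ → ZMod 2 := fun p => ∑ j ∈ range p.2, gridEdgeVal γ (p.1, j) (p.1, j + 1)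
  refine ⟨_, isShift_shiftSign _ γ (σ ∘ gridCoord), fun x y => ?_⟩
  by_cases h : ∃ e : (gridGraph n).E, ∃ x' y', (gridGraph n).ends e = s(x', y') ∧
      gridCoord x' = (x, y) ∧ gridCoord y' = (x, y + 1)
  · obtain ⟨e, x', y', he, hx, hy⟩ := h
    rw [← hx, ← hy, ← apply_eq_gridEdgeVal _ he, shiftSign_eq _ _ he, apply_eq_gridEdgeVal γ he]
    simp only [Function.comp_apply, hx, hy, σ, sum_range_succ]
    grind
  · rw [gridEdgeVal, dif_neg h]

lemma vertVal_eq_of_cells_even {n : ℕ} (γ : (gridGraph n).E → ZMod 2) {x y₀ y₁ : ℕ}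
    (hcell : ∀ y, y₀ ≤ y → y < y₁ → vertVal γ x y = vertVal γ x (y + 1)) :
    ∀ y, y₀ ≤ y → y ≤ y₁ → vertVal γ x y = vertVal γ x y₀ := by
  intro y hy
  induction y, hy using Nat.le_induction with
  | base => exact fun _ => rfl
  | succ y hy ih => exact fun hy₁ => (hcell y hy (by omega)).symm.trans (ih (by omega))

/-- In a row-even signing, a `k × k` window all of whose cells are even is balanced: the
potential summing the vertical signs of one column makes every edge of the window even. -/
lemma isSignedMinor_evenGrid_of_cells_even {k n x₀ y₀ : ℕ} (γ : (gridGraph n).E → ZMod 2)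
    (hrow : IsRowEven γ) (hx₀ : x₀ + k ≤ n) (hy₀ : y₀ + k ≤ n)
    (hcell : ∀ x y, x₀ ≤ x → x + 1 < x₀ + k → y₀ ≤ y → y + 1 < y₀ + k →
      vertVal γ x y = vertVal γ x (y + 1)) :
    IsSignedMinor (gridGraph k) (γ₀ (gridGraph k)) (gridGraph n) γ := by
  refine isSignedMinor_evenGrid_of_blocks γ (fun v => {(x₀ + v.1, y₀ + v.2)})
    (fun p => ∑ x ∈ Ico x₀ p.1, vertVal γ x y₀) (fun v a ha => ?_) (fun u v huv => ?_)
    (fun v => ⟨_, rfl, by rintro a rfl; rfl⟩) (fun i j hi hj => ?_) (fun i j hi hj => ?_)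
  · rw [Set.mem_singleton_iff.mp ha]
    have := v.1.2
    have := v.2.2
    simp only [gridCoord]
    omega
  · refine Set.disjoint_singleton.mpr fun h => huv (gridCoord_injective ?_)
    simp only [gridCoord, Prod.mk.injEq] at h ⊢
    omega
  · refine ⟨_, rfl, _, rfl, Or.inl ⟨rfl, Or.inl rfl⟩, ?_⟩
    change gridEdgeVal γ (x₀ + i, y₀ + j) (x₀ + i, y₀ + j + 1) + _ + _ = 0
    rw [hrow, zero_add, CharTwo.add_self_eq_zero]
  · refine ⟨_, rfl, _, rfl, Or.inr ⟨rfl, Or.inl rfl⟩, ?_⟩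
    have hcol : vertVal γ (x₀ + i) (y₀ + j) = vertVal γ (x₀ + i) y₀ :=
      vertVal_eq_of_cells_even γ (y₁ := y₀ + k - 1)
        (fun y h₁ h₂ => hcell _ y (by omega) (by omega) h₁ (by omega)) _ (by omega) (by omega)
    change vertVal γ (x₀ + i) (y₀ + j) + ∑ x ∈ Ico x₀ (x₀ + i), vertVal γ x y₀ +
      ∑ x ∈ Ico x₀ (x₀ + i + 1), vertVal γ x y₀ = 0
    rw [sum_Ico_succ_top (by omega), hcol]
    grind

section Connectors

variable {n : ℕ} (γ : (gridGraph n).E → ZMod 2) (k : ℕ)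

/-- In the block `[i k, i k + k) × [j k, j k + k)`, a path from the top row to the bottom row
that runs down column `y`, jogs to column `y + 1` in row `m`, and whose vertical edges have
even total sign. -/
def IsConnector (i j y m : ℕ) : Prop :=
  j * k ≤ y ∧ y + 1 < j * k + k ∧ i * k ≤ m ∧ m < i * k + k ∧
    ∑ x ∈ Ico (i * k) (i * k + k), vertVal γ x (if x < m then y else y + 1) = 0

/-- Moving the jog from row `x` to row `x + 1` changes the parity of the connector by
`vertVal γ x y - vertVal γ x (y + 1)`, so one of the two placements is even. -/
lemma exists_isConnector {i j x y : ℕ} (hx : i * k ≤ x) (hx' : x + 1 < i * k + k) (hy : j * k ≤ y)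
    (hy' : y + 1 < j * k + k) (hodd : vertVal γ x y ≠ vertVal γ x (y + 1)) :
    ∃ m, IsConnector γ k i j y m := by
  set S : ℕ → ZMod 2 := fun m =>
    ∑ t ∈ Ico (i * k) (i * k + k), vertVal γ t (if t < m then y else y + 1)
  have hS : S (x + 1) = S x + (vertVal γ x y - vertVal γ x (y + 1)) := by
    rw [← sub_eq_iff_eq_add', ← sum_sub_distrib, sum_eq_single_of_mem x (by simp; omega)]
    · simp
    · intro t _ ht
      rw [if_congr (show t < x + 1 ↔ t < x by omega) rfl rfl, sub_self]
  rcases (by decide : ∀ a b c : ZMod 2, b ≠ c → a = 0 ∨ a + (b - c) = 0) (S x) _ _ hodd with h | h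
  · exact ⟨x, hy, hy', hx, by omega, h⟩
  · exact ⟨x + 1, hy, hy', by omega, hx', hS.trans h⟩

variable (yc m : ℕ → ℕ → ℕ)

def connCol (i j x : ℕ) : ℕ := if x < m i j then yc i j else yc i j + 1

noncomputable def connSum (i j x : ℕ) : ZMod 2 :=
  ∑ t ∈ Ico (i * k) x, vertVal γ t (connCol yc m i j t)

/-- The potential making the connectors even: the sign of the connector of the block of `p`
from the top row of the block down to row `p.1`. -/
noncomputable def connPot (p : ℕ × ℕ) : ZMod 2 := connSum γ k yc m (p.1 / k) (p.2 / k) p.1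

def connSet (i j : ℕ) : Set (ℕ × ℕ) :=
  {p | p.1 = i * k ∧ j * k ≤ p.2 ∧ p.2 < j * k + k} ∪
    {p | i + 1 < k ∧ (p.2 = yc i j ∧ i * k ≤ p.1 ∧ p.1 ≤ m i j ∨
      p.2 = yc i j + 1 ∧ m i j ≤ p.1 ∧ p.1 < i * k + k)}

variable {γ k yc m}

lemma mem_connSet_row {i j x y : ℕ} (hx : x = i * k) (hy : j * k ≤ y) (hy' : y < j * k + k) :
    (x, y) ∈ connSet k yc m i j :=
  Or.inl ⟨hx, hy, hy'⟩

lemma connPot_eq {i j x y : ℕ} (hx : i * k ≤ x) (hx' : x < i * k + k) (hy : j * k ≤ y)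
    (hy' : y < j * k + k) : connPot γ k yc m (x, y) = connSum γ k yc m i j x := by
  simp only [connPot, div_eq_of_mem_block hx hx', div_eq_of_mem_block hy hy']

lemma connPot_mul_left (i y : ℕ) : connPot γ k yc m (i * k, y) = 0 := by
  simp only [connPot, connSum, Nat.div_mul_cancel (Nat.dvd_mul_left k i), Ico_self, sum_empty]

lemma connSum_succ {i j x : ℕ} (hx : i * k ≤ x) :
    connSum γ k yc m i j (x + 1) = connSum γ k yc m i j x + vertVal γ x (connCol yc m i j x) :=
  sum_Ico_succ_top hx _

lemma isEvenGridEdge_row (hrow : IsRowEven γ) (i y : ℕ) :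
    IsEvenGridEdge γ (connPot γ k yc m) (i * k, y) (i * k, y + 1) :=
  ⟨Or.inl ⟨rfl, Or.inl rfl⟩, by rw [hrow, connPot_mul_left, connPot_mul_left, add_zero, add_zero]⟩

lemma isEvenGridEdge_jog (hrow : IsRowEven γ) {i j : ℕ} (hy : j * k ≤ yc i j)
    (hy' : yc i j + 1 < j * k + k) (hm : i * k ≤ m i j) (hm' : m i j < i * k + k) :
    IsEvenGridEdge γ (connPot γ k yc m) (m i j, yc i j) (m i j, yc i j + 1) := by
  refine ⟨Or.inl ⟨rfl, Or.inl rfl⟩, ?_⟩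
  rw [hrow, connPot_eq hm hm' hy (by omega), connPot_eq hm hm' (by omega) hy', zero_add,
    CharTwo.add_self_eq_zero]

lemma isEvenGridEdge_connCol {i j x y : ℕ} (hx : i * k ≤ x) (hx' : x + 1 < i * k + k)
    (hy : j * k ≤ y) (hy' : y < j * k + k) (hcol : connCol yc m i j x = y) :
    IsEvenGridEdge γ (connPot γ k yc m) (x, y) (x + 1, y) := by
  refine ⟨Or.inr ⟨rfl, Or.inl rfl⟩, ?_⟩
  change vertVal γ x _ + _ + _ = 0
  rw [connPot_eq hx (by omega) hy hy', connPot_eq (by omega) hx' hy hy', connSum_succ hx, hcol]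
  grind

lemma isEvenGridEdge_exit {i j x : ℕ} (hcon : IsConnector γ k i j (yc i j) (m i j))
    (hx : x + 1 = (i + 1) * k) :
    IsEvenGridEdge γ (connPot γ k yc m) (x, yc i j + 1) (x + 1, yc i j + 1) := by
  obtain ⟨hy, hy', hm, hm', hsum⟩ := hcon
  have hx' : x + 1 = i * k + k := by rw [hx, add_one_mul]
  refine ⟨Or.inr ⟨rfl, Or.inl rfl⟩, ?_⟩
  change vertVal γ x _ + _ + _ = 0
  have hcol : connCol yc m i j x = yc i j + 1 := if_neg (by omega)
  rw [connPot_eq (i := i) (j := j) (by omega) (by omega) (by omega) hy', hx, connPot_mul_left,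
    add_zero, ← hcol, add_comm, ← connSum_succ (by omega), hx']
  exact hsum

lemma reflTransGen_connSet (hrow : IsRowEven γ) {i j : ℕ}
    (hcon : i + 1 < k → IsConnector γ k i j (yc i j) (m i j)) :
    ∀ a ∈ connSet k yc m i j, ReflTransGen
      (EvenGridStepIn γ (connPot γ k yc m) (connSet k yc m i j)) (i * k, j * k) a := by
  have row : ∀ y, j * k ≤ y → y < j * k + k → ReflTransGen
      (EvenGridStepIn γ (connPot γ k yc m) (connSet k yc m i j)) (i * k, j * k) (i * k, y) :=
    fun y hy hy' => reflTransGen_of_forall_succ (fun t => (i * k, t)) hy fun t ht ht' =>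
      ⟨mem_connSet_row rfl ht (by omega), mem_connSet_row rfl (by omega) (by omega),
        isEvenGridEdge_row hrow i t⟩
  rintro ⟨x, y⟩ (⟨rfl, hy, hy'⟩ | ⟨hi, hxy⟩)
  · exact row y hy hy'
  obtain ⟨hyc, hyc', hm, hm', -⟩ := hcon hi
  have top : ∀ x, i * k ≤ x → x ≤ m i j → ReflTransGen
      (EvenGridStepIn γ (connPot γ k yc m) (connSet k yc m i j)) (i * k, j * k) (x, yc i j) :=
    fun x hx hxm => (row _ hyc (by omega)).trans <|
      reflTransGen_of_forall_succ (fun t => (t, yc i j)) hx fun t ht ht' =>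
        ⟨Or.inr ⟨hi, Or.inl ⟨rfl, ht, by omega⟩⟩, Or.inr ⟨hi, Or.inl ⟨rfl, by omega, by omega⟩⟩,
          isEvenGridEdge_connCol ht (by omega) hyc (by omega) (if_pos (by omega))⟩
  rcases hxy with ⟨rfl, hx, hxm⟩ | ⟨rfl, hmx, hx'⟩
  · exact top x hx hxm
  refine ((top _ hm le_rfl).tail ⟨Or.inr ⟨hi, Or.inl ⟨rfl, hm, le_rfl⟩⟩,
    Or.inr ⟨hi, Or.inr ⟨rfl, le_rfl, hm'⟩⟩, isEvenGridEdge_jog hrow hyc hyc' hm hm'⟩).trans ?_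
  exact reflTransGen_of_forall_succ (fun t => (t, yc i j + 1)) hmx fun t ht ht' =>
    ⟨Or.inr ⟨hi, Or.inr ⟨rfl, ht, by omega⟩⟩, Or.inr ⟨hi, Or.inr ⟨rfl, by omega, by omega⟩⟩,
      isEvenGridEdge_connCol (by omega) (by omega) (by omega) hyc' (if_neg (by omega))⟩

lemma mem_block_of_mem_connSet {i j : ℕ} (hcon : i + 1 < k → IsConnector γ k i j (yc i j) (m i j))
    {a : ℕ × ℕ} (ha : a ∈ connSet k yc m i j) :
    i * k ≤ a.1 ∧ a.1 < i * k + k ∧ j * k ≤ a.2 ∧ a.2 < j * k + k := by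
  rcases ha with ⟨h, hy, hy'⟩ | ⟨hi, hxy⟩
  · omega
  · obtain ⟨hyc, hyc', hm, hm', -⟩ := hcon hi
    omega

end Connectors

lemma isSignedMinor_evenGrid_of_connectors {k n : ℕ} {γ : (gridGraph n).E → ZMod 2}
    (hrow : IsRowEven γ) (hn : k * k ≤ n) (yc m : ℕ → ℕ → ℕ)
    (hcon : ∀ i j, i + 1 < k → j < k → IsConnector γ k i j (yc i j) (m i j)) :
    IsSignedMinor (gridGraph k) (γ₀ (gridGraph k)) (gridGraph n) γ := by
  have hblock : ∀ v : (gridGraph k).V, ∀ a ∈ connSet k yc m v.1 v.2,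
      v.1 * k ≤ a.1 ∧ a.1 < v.1 * k + k ∧ v.2 * k ≤ a.2 ∧ a.2 < v.2 * k + k :=
    fun v _ ha => mem_block_of_mem_connSet (hcon v.1 v.2 · v.2.2) ha
  refine isSignedMinor_evenGrid_of_blocks γ (fun v => connSet k yc m v.1 v.2) (connPot γ k yc m)
    (fun v a ha => ?_) (fun u v huv => ?_) (fun v => ⟨_, ?_, reflTransGen_connSet hrow
      (hcon _ _ · v.2.2)⟩) (fun i j hi hj => ?_) (fun i j hi hj => ?_)
  · have := hblock v a ha
    have := mul_add_le_mul_self v.1.2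
    have := mul_add_le_mul_self v.2.2
    omega
  · refine Set.disjoint_left.mpr fun a hu hv => huv (gridCoord_injective ?_)
    obtain ⟨hu₁, hu₂, hu₃, hu₄⟩ := hblock u a hu
    obtain ⟨hv₁, hv₂, hv₃, hv₄⟩ := hblock v a hv
    simp only [gridCoord, ← div_eq_of_mem_block hu₁ hu₂, ← div_eq_of_mem_block hu₃ hu₄,
      ← div_eq_of_mem_block hv₁ hv₂, ← div_eq_of_mem_block hv₃ hv₄]
  · have := v.2.2
    exact mem_connSet_row rfl le_rfl (by omega)
  · dsimp only
    refine ⟨(i * k, j * k + k - 1), mem_connSet_row rfl (by omega) (by omega),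
      (i * k, j * k + k - 1 + 1), mem_connSet_row rfl (by rw [add_one_mul]; omega)
        (by rw [add_one_mul]; omega), isEvenGridEdge_row hrow i _⟩
  · dsimp only
    obtain ⟨hyc, hyc', hm, hm', -⟩ := hcon i j hi hj
    refine ⟨(i * k + k - 1, yc i j + 1), Or.inr ⟨hi, Or.inr ⟨rfl, by omega, by omega⟩⟩,
      (i * k + k - 1 + 1, yc i j + 1), mem_connSet_row (by rw [add_one_mul]; omega) (by omega)
        (by omega), isEvenGridEdge_exit (hcon i j hi hj) (by rw [add_one_mul]; omega)⟩

lemma isSignedMinor_evenGrid_of_isRowEven {k n : ℕ} {γ : (gridGraph n).E → ZMod 2}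
    (hrow : IsRowEven γ) (hn : k * k ≤ n) :
    IsSignedMinor (gridGraph k) (γ₀ (gridGraph k)) (gridGraph n) γ := by
  by_cases hbal : ∃ i j, i + 1 < k ∧ j < k ∧ ∀ x y, i * k ≤ x → x + 1 < i * k + k →
      j * k ≤ y → y + 1 < j * k + k → vertVal γ x y = vertVal γ x (y + 1)
  · obtain ⟨i, j, hi, hj, hcell⟩ := hbal
    have := mul_add_le_mul_self (show i < k by omega)
    have := mul_add_le_mul_self hj
    exact isSignedMinor_evenGrid_of_cells_even γ hrow (by omega) (by omega) hcell
  · push Not at hbal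
    have hcon : ∀ i j, ∃ y m, i + 1 < k → j < k → IsConnector γ k i j y m := by
      intro i j
      by_cases h : i + 1 < k ∧ j < k
      · obtain ⟨x, y, hx, hx', hy, hy', hodd⟩ := hbal i j h.1 h.2
        obtain ⟨m, hm⟩ := exists_isConnector γ k hx hx' hy hy' hodd
        exact ⟨y, m, fun _ _ => hm⟩
      · exact ⟨0, 0, fun hi hj => absurd ⟨hi, hj⟩ h⟩
    choose yc m hcon using hcon
    exact isSignedMinor_evenGrid_of_connectors hrow hn yc m hcon

lemma isSignedMinor_evenGrid {k n : ℕ} (hn : k * k ≤ n) (γ : (gridGraph n).E → ZMod 2) :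
    IsSignedMinor (gridGraph k) (γ₀ (gridGraph k)) (gridGraph n) γ := by
  obtain ⟨γ', hshift, hrow⟩ := exists_isShift_rowEven γ
  exact (isSignedMinor_evenGrid_of_isRowEven hrow hn).trans (isSignedMinor_self_of_isShift hshift)

/-- Forbidding the `k × k` grid as a minor forbids the even
`k × k` grid as a signed minor; conversely forbidding the even `k × k` grid as a
signed minor forbids the `k² × k²` grid as a minor. -/
theorem statement_4 (k : ℕ) (G : MGraph) (γ : G.E → ZMod 2) :
    (¬ IsMinor (gridGraph k) G →
      ¬ IsSignedMinor (gridGraph k) (γ₀ (gridGraph k)) G γ) ∧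
    (¬ IsSignedMinor (gridGraph k) (γ₀ (gridGraph k)) G γ →
      ¬ IsMinor (gridGraph (k ^ 2)) G) := by
  refine ⟨fun h hsigned => h hsigned.isMinor, fun h ⟨M⟩ => ?_⟩
  obtain ⟨γH, hγH⟩ := M.exists_isSignedMinor γ
  exact h ((isSignedMinor_evenGrid (sq k).ge γH).trans hγH)

end TDMPaper
end

section
/- A graph G contains a graph H as an odd-minor if and only if the signed graph (G,γ₁) contains (H,γ₁) as a signed graph minor, where γ₁ labels every edge 1. -/
namespace TDMPaper

open MGraph

/-! Shifting the all-odd signing by `c : V → ZMod 2` makes the edge `uv` even exactly when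
`c u ≠ c v`. Hence the shift of a signed minor model is the 2-colouring of an odd-minor model
with the same branch sets and edges, and conversely. -/

lemma ZMod.two_one_add_add_eq_zero_iff (a b : ZMod 2) : 1 + a + b = 0 ↔ a ≠ b := by
  revert a b; decide

lemma ZMod.two_one_add_add_eq_one_iff (a b : ZMod 2) : 1 + a + b = 1 ↔ a = b := by
  revert a b; decide

section ColourShift

variable {G : MGraph} {γ : G.E → ZMod 2} {c : G.V → ZMod 2}
  (hγ : ∀ e u v, G.ends e = s(u, v) → γ e = 1 + c u + c v)
include hγ

lemma eq_zero_iff_ne_of_shift_γ₁ {e : G.E} {u v : G.V} (he : G.ends e = s(u, v)) :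
    γ e = 0 ↔ c u ≠ c v := by
  rw [hγ e u v he, ZMod.two_one_add_add_eq_zero_iff]

lemma eq_one_iff_eq_of_shift_γ₁ {e : G.E} {u v : G.V} (he : G.ends e = s(u, v)) :
    γ e = 1 ↔ c u = c v := by
  rw [hγ e u v he, ZMod.two_one_add_add_eq_one_iff]

end ColourShift

def shiftγ₁ (G : MGraph) (c : G.V → ZMod 2) : G.E → ZMod 2 :=
  fun e => Sym2.lift ⟨fun u v => 1 + c u + c v, fun u v => by ring⟩ (G.ends e)

lemma shiftγ₁_apply {G : MGraph} {c : G.V → ZMod 2} (e : G.E) (u v : G.V)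
    (he : G.ends e = s(u, v)) : shiftγ₁ G c e = 1 + c u + c v := by
  simp only [shiftγ₁, he, Sym2.lift_mk]

lemma isShift_shiftγ₁ (G : MGraph) (c : G.V → ZMod 2) : IsShift G (γ₁ G) (shiftγ₁ G c) :=
  ⟨c, shiftγ₁_apply⟩

def OddMinorModel.toSignedMinorModel {H G : MGraph} (M : OddMinorModel H G) :
    SignedMinorModel H G (γ₁ H) (γ₁ G) where
  γ' := shiftγ₁ G M.col
  shift := isShift_shiftγ₁ G M.col
  bs := M.bs
  em := M.em
  bs_nonempty := M.bs_nonempty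
  bs_disjoint := M.bs_disjoint
  bs_connected v a ha b hb := by
    refine Relation.ReflTransGen.mono ?_ _ _ (M.bs_connected v a ha b hb)
    rintro x y ⟨hx, hy, hne, e, he⟩
    exact ⟨hx, hy, e, (eq_zero_iff_ne_of_shift_γ₁ (shiftγ₁_apply (c := M.col)) he).mpr hne, he⟩
  em_inj := M.em_inj
  em_ends := M.em_ends
  em_parity eH := (eq_one_iff_eq_of_shift_γ₁ (shiftγ₁_apply (c := M.col))
    (G.ends_ep (M.em eH))).mpr (M.em_mono eH _ _ (G.ends_ep (M.em eH)))

noncomputable def SignedMinorModel.toOddMinorModel {H G : MGraph}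
    (M : SignedMinorModel H G (γ₁ H) (γ₁ G)) : OddMinorModel H G :=
  have hσ := M.shift.choose_spec
  { bs := M.bs
    em := M.em
    col := M.shift.choose
    bs_nonempty := M.bs_nonempty
    bs_disjoint := M.bs_disjoint
    bs_connected := fun v a ha b hb => by
      refine Relation.ReflTransGen.mono ?_ _ _ (M.bs_connected v a ha b hb)
      rintro x y ⟨hx, hy, e, he0, he⟩
      exact ⟨hx, hy, (eq_zero_iff_ne_of_shift_γ₁ hσ he).mp he0, e, he⟩
    em_inj := M.em_inj
    em_ends := M.em_ends
    em_mono := fun eH _ _ he => (eq_one_iff_eq_of_shift_γ₁ hσ he).mp (M.em_parity eH) }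

/-- `G` contains `H` as an odd-minor iff `(G,γ₁)` contains
`(H,γ₁)` as a signed graph minor. -/
theorem statement_5 (H G : MGraph) :
    IsOddMinor H G ↔ IsSignedMinor H (γ₁ H) G (γ₁ G) :=
  ⟨fun ⟨M⟩ => ⟨M.toSignedMinorModel⟩, fun ⟨M⟩ => ⟨M.toOddMinorModel⟩⟩

end TDMPaper
end
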